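/- arXiv:0809.1826 — 11 statements merged into one kernel-verified Lean document; each statement's English description precedes it below -/
import Mathlib

section
/- (Key step of Lemma 5.) Let p be a concave bivariate polynomial of degree 4 and suppose P = conv{x ∈ ℝ² : p(x) = 0} is compact with nonempty interior. Then for every affine polynomial f with f ≥ 0 on P there exists c ≥ 0 such that f(x) − c·p(x) ≥ 0 for all x ∈ ℝ². -/
/-- Evaluation of a bivariate polynomial of degree at most 4, given by its
coefficients `c i j` of the monomials `x₁^i * x₂^j`. -/
noncomputable def evalPoly (c : ℕ → ℕ → ℝ) (x : ℝ × ℝ) : ℝ :=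
  ∑ i ∈ Finset.range 5, ∑ j ∈ Finset.range 5, c i j * x.1 ^ i * x.2 ^ j

lemma evalPoly_continuous (c : ℕ → ℕ → ℝ) : Continuous (evalPoly c) := by
  unfold evalPoly
  apply continuous_finset_sum; intro i _
  apply continuous_finset_sum; intro j _
  exact (continuous_const.mul (continuous_fst.pow i)).mul (continuous_snd.pow j)

lemma evalPoly_apply (c : ℕ → ℕ → ℝ) (x y : ℝ) :
    evalPoly c (x, y) = ∑ i ∈ Finset.range 5, (∑ j ∈ Finset.range 5, c i j * y ^ j) * x ^ i := by
  unfold evalPoly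
  refine Finset.sum_congr rfl fun i _ => ?_
  rw [Finset.sum_mul]
  refine Finset.sum_congr rfl fun j _ => ?_
  ring

lemma vanish1 (a : ℕ → ℝ) {s t : ℝ} (hst : s < t)
    (h : ∀ x ∈ Set.Ioo s t, ∑ i ∈ Finset.range 5, a i * x ^ i = 0) :
    ∀ i < 5, a i = 0 := by
  set q : Polynomial ℝ := ∑ i ∈ Finset.range 5, Polynomial.C (a i) * Polynomial.X ^ i with hq
  have heval : ∀ x : ℝ, q.eval x = ∑ i ∈ Finset.range 5, a i * x ^ i := by
    intro x
    rw [hq, Polynomial.eval_finset_sum]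
    simp
  have hq0 : q = 0 := by
    apply Polynomial.eq_zero_of_infinite_isRoot
    apply Set.Infinite.mono (s := Set.Ioo s t)
    · intro x hx
      simp only [Set.mem_setOf_eq, Polynomial.IsRoot, heval]
      exact h x hx
    · exact Set.Ioo_infinite hst
  intro i hi
  have hcoeff : q.coeff i = a i := by
    rw [hq, Polynomial.finset_sum_coeff]
    simp only [Polynomial.coeff_C_mul, Polynomial.coeff_X_pow]
    rw [Finset.sum_eq_single i]
    · simp
    · intro b _ hb; simp [Ne.symm hb]
    · intro hnot; exact absurd (Finset.mem_range.2 hi) hnot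
  rw [hq0] at hcoeff
  simpa using hcoeff.symm

lemma vanish2 (c : ℕ → ℕ → ℝ) {s1 t1 s2 t2 : ℝ} (h1 : s1 < t1) (h2 : s2 < t2)
    (h : ∀ x y : ℝ, x ∈ Set.Ioo s1 t1 → y ∈ Set.Ioo s2 t2 → evalPoly c (x, y) = 0) :
    ∀ i < 5, ∀ j < 5, c i j = 0 := by
  have key : ∀ y ∈ Set.Ioo s2 t2, ∀ i < 5, (∑ j ∈ Finset.range 5, c i j * y ^ j) = 0 := by
    intro y hy
    apply vanish1 _ h1
    intro x hx
    rw [← evalPoly_apply]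
    exact h x y hx hy
  intro i hi j hj
  exact vanish1 (fun j => c i j) h2 (fun y hy => key y hy i hi) j hj

lemma line_interior_empty (z d : ℝ × ℝ) (hd : d ≠ 0) :
    interior {x : ℝ × ℝ | d.1 * (x.2 - z.2) - d.2 * (x.1 - z.1) = 0} = ∅ := by
  rw [Set.eq_empty_iff_forall_notMem]
  intro m hm
  have hnz : 0 < d.1 ^ 2 + d.2 ^ 2 := by
    have : d.1 ≠ 0 ∨ d.2 ≠ 0 := by
      by_contra hc
      push_neg at hc
      exact hd (Prod.ext hc.1 hc.2)
    rcases this with h | h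
    · positivity
    · positivity
  obtain ⟨δ, hδ, hB⟩ := Metric.mem_nhds_iff.1 (mem_interior_iff_mem_nhds.1 hm)
  set r : ℝ := δ / (2 * (|d.1| + |d.2| + 1)) with hr
  have hrpos : 0 < r := by positivity
  set m' : ℝ × ℝ := m + r • (-d.2, d.1) with hm'
  have hmem : m' ∈ Metric.ball m δ := by
    rw [Metric.mem_ball, dist_eq_norm]
    have : m' - m = (r * (-d.2), r * d.1) := by
      simp [hm', Prod.ext_iff]
    rw [this, Prod.norm_def]
    have h1 : ‖r * (-d.2)‖ ≤ r * (|d.1| + |d.2|) := by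
      rw [Real.norm_eq_abs, abs_mul, abs_of_pos hrpos, abs_neg]
      nlinarith [abs_nonneg d.1]
    have h2 : ‖r * d.1‖ ≤ r * (|d.1| + |d.2|) := by
      rw [Real.norm_eq_abs, abs_mul, abs_of_pos hrpos]
      nlinarith [abs_nonneg d.2]
    have : r * (|d.1| + |d.2|) < δ := by
      rw [hr]
      rw [div_mul_eq_mul_div, div_lt_iff₀ (by positivity)]
      nlinarith [abs_nonneg d.1, abs_nonneg d.2]
    exact lt_of_le_of_lt (max_le h1 h2) this
  have hm'L := hB hmem
  have hmL : d.1 * (m.2 - z.2) - d.2 * (m.1 - z.1) = 0 := by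
    have := interior_subset hm
    simpa using this
  simp only [Set.mem_setOf_eq, hm'] at hm'L
  have e1 : (m + r • ((-d.2, d.1) : ℝ × ℝ)).1 = m.1 + r * (-d.2) := rfl
  have e2 : (m + r • ((-d.2, d.1) : ℝ × ℝ)).2 = m.2 + r * d.1 := rfl
  rw [e1, e2] at hm'L
  nlinarith [hm'L, hmL, hnz, hrpos]

set_option maxHeartbeats 2000000 in
/-- key step of Lemma 5: if the quartic `p` is concave and
`P = conv {x : p(x) = 0}` is compact with nonempty interior, then every affine
polynomial `f` nonnegative on `P` admits a constant `t ≥ 0` with `f - t·p ≥ 0` on `ℝ²`. -/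
theorem concave_quartic_certificate (c : ℕ → ℕ → ℝ)
    (hsupp : ∀ i j : ℕ, 4 < i + j → c i j = 0)
    (hdeg : ∃ i j : ℕ, i + j = 4 ∧ c i j ≠ 0)
    (hconc : ConcaveOn ℝ Set.univ (evalPoly c))
    (hcompact : IsCompact (convexHull ℝ {x : ℝ × ℝ | evalPoly c x = 0}))
    (hint : (interior (convexHull ℝ {x : ℝ × ℝ | evalPoly c x = 0})).Nonempty) :
    ∀ f0 f1 f2 : ℝ,
      (∀ x ∈ convexHull ℝ {x : ℝ × ℝ | evalPoly c x = 0},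
        0 ≤ f0 + f1 * x.1 + f2 * x.2) →
      ∃ t : ℝ, 0 ≤ t ∧
        ∀ x : ℝ × ℝ, 0 ≤ (f0 + f1 * x.1 + f2 * x.2) - t * evalPoly c x := by
  intro f0 f1 f2 hf
  set p : ℝ × ℝ → ℝ := evalPoly c with hpdef
  set Z : Set (ℝ × ℝ) := {x | p x = 0} with hZdef
  set P : Set (ℝ × ℝ) := convexHull ℝ Z with hPdef
  have hpc : Continuous p := evalPoly_continuous c
  have hPconv : Convex ℝ P := convex_convexHull ℝ Z
  -- F1 : p is nonnegative on P
  have hF1 : ∀ x ∈ P, 0 ≤ p x := by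
    intro x hx
    obtain ⟨y, hyZ, hle⟩ := hconc.exists_le_of_mem_convexHull (Set.subset_univ Z) hx
    have : p y = 0 := hyZ
    linarith
  -- a bound for P
  obtain ⟨R, hR⟩ := hcompact.isBounded.subset_closedBall 0
  -- an interior point where p is positive
  obtain ⟨z, hzint, hpz⟩ : ∃ z ∈ interior P, 0 < p z := by
    by_contra hcon
    push_neg at hcon
    obtain ⟨x₀, hx₀⟩ := hint
    obtain ⟨ε, hε, hball⟩ := Metric.isOpen_iff.1 isOpen_interior x₀ hx₀
    have hvan : ∀ x y : ℝ, x ∈ Set.Ioo (x₀.1 - ε) (x₀.1 + ε) → y ∈ Set.Ioo (x₀.2 - ε) (x₀.2 + ε) →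
        evalPoly c (x, y) = 0 := by
      intro x y hx hy
      have hmem : ((x, y) : ℝ × ℝ) ∈ Metric.ball x₀ ε := by
        rw [← Prod.mk.eta (p := x₀), ← ball_prod_same]
        exact Set.mk_mem_prod (by rwa [Real.ball_eq_Ioo]) (by rwa [Real.ball_eq_Ioo])
      have h1 := hball hmem
      have h2 := hF1 _ (interior_subset h1)
      have h3 := hcon _ h1
      exact le_antisymm h3 h2
    obtain ⟨i, j, hij, hcij⟩ := hdeg
    exact hcij (vanish2 c (by linarith) (by linarith) hvan i (by omega) j (by omega))
  have hzP : z ∈ P := interior_subset hzint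
  have hR0 : 0 ≤ R := le_trans (norm_nonneg z) (mem_closedBall_zero_iff.1 (hR hzP))
  -- F3 : every point where p is positive lies in P
  have hF3 : ∀ y : ℝ × ℝ, 0 < p y → y ∈ P := by
    intro y hpy
    by_cases hyz : y = z
    · exact hyz ▸ hzP
    set d : ℝ × ℝ := y - z with hd
    have hd0 : d ≠ 0 := sub_ne_zero.2 hyz
    have hcont : Continuous (fun t : ℝ => p (z + t • d)) :=
      hpc.comp (continuous_const.add (continuous_id.smul continuous_const))
    by_cases H : ∃ t ≥ (1:ℝ), p (z + t • d) < 0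
    · obtain ⟨t2, ht2, hneg⟩ := H
      have h1d : z + (1:ℝ) • d = y := by simp [hd]
      have hiv := intermediate_value_Icc' ht2 hcont.continuousOn
      have h0mem : (0:ℝ) ∈ Set.Icc (p (z + t2 • d)) (p (z + (1:ℝ) • d)) := by
        constructor
        · exact hneg.le
        · rw [h1d]; exact hpy.le
      obtain ⟨t0, ht0mem, ht0⟩ := hiv h0mem
      have ht01 : 1 ≤ t0 := ht0mem.1
      have ht0pos : 0 < t0 := lt_of_lt_of_le one_pos ht01
      have hwZ : z + t0 • d ∈ Z := ht0
      have hwP : z + t0 • d ∈ P := subset_convexHull ℝ Z hwZ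
      have hy : (1/t0) • (z + t0 • d) + (1 - 1/t0) • z = y := by
        rw [← h1d]
        apply Prod.ext
        · simp only [Prod.fst_add, Prod.smul_fst, smul_eq_mul, Prod.fst_add]
          field_simp
          ring
        · simp only [Prod.snd_add, Prod.smul_snd, smul_eq_mul, Prod.snd_add]
          field_simp
          ring
      exact hy ▸ hPconv hwP hzP (by positivity) (by
        have : 1/t0 ≤ 1 := by rw [div_le_one ht0pos]; exact ht01
        linarith) (by ring)
    · exfalso
      push_neg at H
      -- find a zero off the line z + ℝ d
      have hZline : ¬ (Z ⊆ {x : ℝ × ℝ | d.1 * (x.2 - z.2) - d.2 * (x.1 - z.1) = 0}) := by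
        intro hsub
        have hLconv : Convex ℝ {x : ℝ × ℝ | d.1 * (x.2 - z.2) - d.2 * (x.1 - z.1) = 0} := by
          intro u hu v hv α β hα hβ hαβ
          simp only [Set.mem_setOf_eq] at hu hv ⊢
          have e1 : (α • u + β • v).1 = α * u.1 + β * v.1 := rfl
          have e2 : (α • u + β • v).2 = α * u.2 + β * v.2 := rfl
          rw [e1, e2]
          linear_combination α * hu + β * hv + (d.1 * z.2 - d.2 * z.1) * hαβ
        have hPL := convexHull_min hsub hLconv
        have h2 := interior_mono hPL hzint
        rw [line_interior_empty z d hd0] at h2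
        exact h2
      obtain ⟨w1, hw1Z, hw1L⟩ := Set.not_subset.1 hZline
      set e : ℝ × ℝ := w1 - z with he
      have hdet : d.1 * e.2 - d.2 * e.1 ≠ 0 := by
        simp only [Set.mem_setOf_eq] at hw1L
        simpa [he] using hw1L
      have hw1p : p w1 = 0 := hw1Z
      -- shadow: beyond w1 from z, p is very negative
      have hshadow : ∀ s : ℝ, 1 < s → p (z + s • e) ≤ (1 - s) * p z := by
        intro s hs
        have hs0 : 0 < s := by linarith
        have hcombo : (1/s) • (z + s • e) + (1 - 1/s) • z = w1 := by
          apply Prod.ext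
          · show (1/s) * (z.1 + s * e.1) + (1 - 1/s) * z.1 = w1.1
            have : e.1 = w1.1 - z.1 := rfl
            rw [this]; field_simp; ring
          · show (1/s) * (z.2 + s * e.2) + (1 - 1/s) * z.2 = w1.2
            have : e.2 = w1.2 - z.2 := rfl
            rw [this]; field_simp; ring
        have ha' : (0:ℝ) ≤ 1/s := by positivity
        have hb' : (0:ℝ) ≤ 1 - 1/s := by
          have : 1/s ≤ 1 := by rw [div_le_one hs0]; linarith
          linarith
        have hab' : 1/s + (1 - 1/s) = 1 := by ring
        have key := hconc.2 (Set.mem_univ (z + s • e)) (Set.mem_univ z) ha' hb' hab'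
        rw [hcombo] at key
        rw [hw1p] at key
        simp only [smul_eq_mul] at key
        have hmul := mul_le_mul_of_nonneg_left key hs0.le
        have hexp : s * (1/s * p (z + s • e) + (1 - 1/s) * p z)
            = p (z + s • e) + (s - 1) * p z := by
          field_simp
        rw [hexp, mul_zero] at hmul
        linarith
      -- linear functional positive on both directions
      set Δ : ℝ := d.1 * e.2 - d.2 * e.1 with hΔ
      set a : ℝ := (e.2 - d.2) / Δ with ha
      set b : ℝ := (d.1 - e.1) / Δ with hb
      have had : a * d.1 + b * d.2 = 1 := by
        rw [ha, hb]; field_simp; ring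
      have hae : a * e.1 + b * e.2 = 1 := by
        rw [ha, hb]; field_simp; ring
      set K : ℝ := |a| + |b| with hK
      have hKpos : 0 < K := by
        rcases eq_or_lt_of_le (by positivity : (0:ℝ) ≤ K) with h | h
        · exfalso
          have ha0 : a = 0 := by
            have := abs_nonneg a; have := abs_nonneg b
            have : |a| = 0 := by rw [hK] at h; linarith
            exact abs_eq_zero.1 this
          have hb0 : b = 0 := by
            have := abs_nonneg a; have := abs_nonneg b
            have : |b| = 0 := by rw [hK] at h; linarith
            exact abs_eq_zero.1 this
          rw [ha0, hb0] at had; norm_num at had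
        · exact h
      set lz : ℝ := a * z.1 + b * z.2 with hlz
      set M : ℝ := 2 + |lz| + K * (R + 1) with hM
      have hM2 : 2 ≤ M := by
        rw [hM]
        nlinarith [abs_nonneg lz, hKpos, hR0]
      set q : ℝ × ℝ := z + M • d with hq
      set q' : ℝ × ℝ := z + M • e with hq'
      have hpq : 0 ≤ p q := H M (by linarith)
      have hpq' : p q' < 0 := by
        have := hshadow M (by linarith)
        nlinarith [hpz]
      -- IVT along the segment from q' to q
      have hcont2 : Continuous (fun l : ℝ => p (q' + l • (q - q'))) :=
        hpc.comp (continuous_const.add (continuous_id.smul continuous_const))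
      have hiv := intermediate_value_Icc (zero_le_one (α := ℝ)) hcont2.continuousOn
      have h0mem : (0:ℝ) ∈ Set.Icc (p (q' + (0:ℝ) • (q - q'))) (p (q' + (1:ℝ) • (q - q'))) := by
        constructor
        · simpa using hpq'.le
        · simpa using hpq
      obtain ⟨l0, hl0mem, hl0⟩ := hiv h0mem
      set m : ℝ × ℝ := q' + l0 • (q - q') with hm
      have hmZ : m ∈ Z := hl0
      have hmP : m ∈ P := subset_convexHull ℝ Z hmZ
      have hmball : ‖m‖ ≤ R := mem_closedBall_zero_iff.1 (hR hmP)
      have hm1 : m.1 = z.1 + (l0 * M) * d.1 + ((1 - l0) * M) * e.1 := by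
        show q'.1 + l0 * (q.1 - q'.1) = _
        show (z.1 + M * e.1) + l0 * ((z.1 + M * d.1) - (z.1 + M * e.1)) = _
        ring
      have hm2 : m.2 = z.2 + (l0 * M) * d.2 + ((1 - l0) * M) * e.2 := by
        show q'.2 + l0 * (q.2 - q'.2) = _
        show (z.2 + M * e.2) + l0 * ((z.2 + M * d.2) - (z.2 + M * e.2)) = _
        ring
      have hlm : a * m.1 + b * m.2 = lz + M := by
        rw [hm1, hm2, hlz]
        linear_combination (l0 * M) * had + ((1 - l0) * M) * hae
      have h1 : |m.1| ≤ R := le_trans (by simpa [Real.norm_eq_abs] using norm_fst_le m) hmball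
      have h2 : |m.2| ≤ R := le_trans (by simpa [Real.norm_eq_abs] using norm_snd_le m) hmball
      have ha1 : a * m.1 ≤ |a| * R :=
        calc a * m.1 ≤ |a * m.1| := le_abs_self _
          _ = |a| * |m.1| := abs_mul _ _
          _ ≤ |a| * R := mul_le_mul_of_nonneg_left h1 (abs_nonneg a)
      have hb1 : b * m.2 ≤ |b| * R :=
        calc b * m.2 ≤ |b * m.2| := le_abs_self _
          _ = |b| * |m.2| := abs_mul _ _
          _ ≤ |b| * R := mul_le_mul_of_nonneg_left h2 (abs_nonneg b)
      have hub : lz + M ≤ K * R := by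
        rw [← hlm, hK]
        linarith
      rw [hM, hK] at hub
      nlinarith [abs_nonneg lz, neg_abs_le lz, abs_nonneg a, abs_nonneg b, hKpos]
  -- Separation argument in the plane of values (p x, f x)
  set Cs : Set (ℝ × ℝ) := {uv | ∃ x : ℝ × ℝ, uv.1 ≤ p x ∧ f0 + f1 * x.1 + f2 * x.2 ≤ uv.2}
    with hCsdef
  set Q : Set (ℝ × ℝ) := Set.Ioi (0:ℝ) ×ˢ Set.Iio (0:ℝ) with hQdef
  have hQconv : Convex ℝ Q := (convex_Ioi 0).prod (convex_Iio 0)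
  have hQopen : IsOpen Q := isOpen_Ioi.prod isOpen_Iio
  have hCconv : Convex ℝ Cs := by
    rintro u ⟨x1, hx1, hx1'⟩ v ⟨x2, hx2, hx2'⟩ α β hα hβ hαβ
    refine ⟨α • x1 + β • x2, ?_, ?_⟩
    · have key := hconc.2 (Set.mem_univ x1) (Set.mem_univ x2) hα hβ hαβ
      simp only [smul_eq_mul] at key
      have e1 : (α • u + β • v).1 = α * u.1 + β * v.1 := rfl
      rw [e1]
      have h1 : α * u.1 ≤ α * p x1 := mul_le_mul_of_nonneg_left hx1 hα
      have h2 : β * v.1 ≤ β * p x2 := mul_le_mul_of_nonneg_left hx2 hβ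
      linarith
    · have e2 : (α • u + β • v).2 = α * u.2 + β * v.2 := rfl
      have ef1 : (α • x1 + β • x2).1 = α * x1.1 + β * x2.1 := rfl
      have ef2 : (α • x1 + β • x2).2 = α * x1.2 + β * x2.2 := rfl
      rw [e2, ef1, ef2]
      have h1 : α * (f0 + f1 * x1.1 + f2 * x1.2) ≤ α * u.2 := mul_le_mul_of_nonneg_left hx1' hα
      have h2 : β * (f0 + f1 * x2.1 + f2 * x2.2) ≤ β * v.2 := mul_le_mul_of_nonneg_left hx2' hβ
      have hsum : f0 + f1 * (α * x1.1 + β * x2.1) + f2 * (α * x1.2 + β * x2.2)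
          = α * (f0 + f1 * x1.1 + f2 * x1.2) + β * (f0 + f1 * x2.1 + f2 * x2.2) := by
        linear_combination (-f0) * hαβ
      rw [hsum]
      linarith
  have hdisj : Disjoint Q Cs := by
    rw [Set.disjoint_left]
    rintro ⟨u, v⟩ hq ⟨x, hux, hxv⟩
    have hu : 0 < u := hq.1
    have hv : v < 0 := hq.2
    have hx : 0 < p x := lt_of_lt_of_le hu hux
    have := hf x (hF3 x hx)
    linarith
  obtain ⟨L, u0, hQs, hCsep⟩ := geometric_hahn_banach_open hQconv hQopen hCconv hdisj
  set a : ℝ := L (1, 0) with hadef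
  set b : ℝ := L (0, 1) with hbdef
  have hl : ∀ u v : ℝ, L (u, v) = u * a + v * b := by
    intro u v
    have hrepr : ((u, v) : ℝ × ℝ) = u • ((1, 0) : ℝ × ℝ) + v • ((0, 1) : ℝ × ℝ) := by
      simp [Prod.ext_iff]
    rw [hrepr, map_add, map_smul, map_smul, smul_eq_mul, smul_eq_mul, hadef, hbdef]
  have hQmem : ∀ u v : ℝ, 0 < u → v < 0 → u * a + v * b < u0 := by
    intro u v h1 h2
    have := hQs (u, v) (Set.mk_mem_prod h1 h2)
    rwa [hl] at this
  have hCx : ∀ x : ℝ × ℝ, u0 ≤ p x * a + (f0 + f1 * x.1 + f2 * x.2) * b := by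
    intro x
    have := hCsep (p x, f0 + f1 * x.1 + f2 * x.2) ⟨x, le_refl _, le_refl _⟩
    rwa [hl] at this
  have ha : a ≤ 0 := by
    by_contra hcon
    push_neg at hcon
    set M := max 1 ((u0 + b + 1) / a) with hMdef
    have hM1 : (1:ℝ) ≤ M := le_max_left _ _
    have h1 := hQmem M (-1) (lt_of_lt_of_le one_pos hM1) (by norm_num)
    have h2 : (u0 + b + 1) / a ≤ M := le_max_right _ _
    rw [div_le_iff₀ hcon] at h2
    nlinarith
  have hb : 0 ≤ b := by
    by_contra hcon
    push_neg at hcon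
    set M := max 1 ((u0 - a + 1) / (-b)) with hMdef
    have hM1 : (1:ℝ) ≤ M := le_max_left _ _
    have h1 := hQmem 1 (-M) one_pos (by linarith)
    have h2 : (u0 - a + 1) / (-b) ≤ M := le_max_right _ _
    rw [div_le_iff₀ (by linarith : (0:ℝ) < -b)] at h2
    nlinarith
  have hu0 : 0 ≤ u0 := by
    by_contra hcon
    push_neg at hcon
    have h1 := hQmem 1 (-1) one_pos (by norm_num)
    have hab : a - b < 0 := by linarith
    have hε : 0 < u0 / (2 * (a - b)) := div_pos_of_neg_of_neg hcon (by linarith)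
    have h2 := hQmem (u0 / (2 * (a - b))) (-(u0 / (2 * (a - b)))) hε (by linarith)
    have hne : a - b ≠ 0 := ne_of_lt hab
    have h3 : u0 / (2 * (a - b)) * a + (-(u0 / (2 * (a - b)))) * b = u0 / 2 := by
      field_simp
      ring
    rw [h3] at h2
    linarith
  have hbpos : 0 < b := by
    rcases lt_or_eq_of_le hb with h | h
    · exact h
    · exfalso
      have h1 := hCx z
      have h2 := hQmem (p z) (-1) hpz (by norm_num)
      rw [← h] at h1 h2
      simp only [mul_zero, add_zero, neg_mul, zero_mul] at h1 h2
      linarith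
  refine ⟨-a / b, div_nonneg (neg_nonneg.2 ha) hbpos.le, ?_⟩
  intro x
  have h1 := hCx x
  have h2 : 0 ≤ p x * a + (f0 + f1 * x.1 + f2 * x.2) * b := le_trans hu0 h1
  have h3 : f0 + f1 * x.1 + f2 * x.2 - (-a / b) * p x
      = (p x * a + (f0 + f1 * x.1 + f2 * x.2) * b) / b := by
    field_simp
    ring
  rw [h3]
  exact div_nonneg h2 hbpos.le
end

section
/- (Certificate form of Lemma 6.) Let p be a bivariate real polynomial and x* ∈ ℝ² a singular point of the curve {p = 0}, i.e. p(x*) = 0 and ∇p(x*) = 0. Let f be an affine polynomial with f(x*) = 0 and nonzero linear part (∇f ≠ 0). Then there exist no polynomials s₀, s₁ ∈ ℝ[x₁,x₂] with s₀ a sum of squares of polynomials such that f = s₀ + s₁·p. In particular f does not belong to F_k for any order k of the Lasserre hierarchy. -/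
open MvPolynomial

lemma aux_sos_eval_zero {n : ℕ} (xs : Fin 2 → ℝ) (q : Fin n → MvPolynomial (Fin 2) ℝ)
    (h : eval xs (∑ i, q i ^ 2) = 0) (i : Fin n) : eval xs (q i) = 0 := by
  have h' : ∑ i, (eval xs (q i)) ^ 2 = 0 := by
    simpa using h
  have := (Finset.sum_eq_zero_iff_of_nonneg (fun j _ => sq_nonneg (eval xs (q j)))).mp h' i
    (Finset.mem_univ i)
  exact pow_eq_zero_iff (by norm_num) |>.mp this

lemma aux_pderiv_sos_eval_zero {n : ℕ} (xs : Fin 2 → ℝ) (q : Fin n → MvPolynomial (Fin 2) ℝ)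
    (h : eval xs (∑ i, q i ^ 2) = 0) (j : Fin 2) :
    eval xs (pderiv j (∑ i, q i ^ 2)) = 0 := by
  rw [map_sum, map_sum]
  apply Finset.sum_eq_zero
  intro i _
  have hqi := aux_sos_eval_zero xs q h i
  rw [sq, pderiv_mul]
  simp [hqi]

/-- certificate form of Lemma 6: if `x*` is a singular point of the
curve `{p = 0}` (i.e. `p(x*) = 0` and `∇p(x*) = 0`) and `f` is an affine polynomial
vanishing at `x*` with nonzero linear part, then there is no representation
`f = s₀ + s₁·p` with `s₀` a sum of squares of polynomials. -/
theorem no_sos_certificate_at_singular_point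
    (p : MvPolynomial (Fin 2) ℝ) (xs : Fin 2 → ℝ)
    (hp : eval xs p = 0)
    (hp1 : eval xs (pderiv 0 p) = 0)
    (hp2 : eval xs (pderiv 1 p) = 0)
    (f0 f1 f2 : ℝ)
    (hf : f0 + f1 * xs 0 + f2 * xs 1 = 0)
    (hflin : (f1, f2) ≠ (0, 0)) :
    ¬ ∃ (s0 s1 : MvPolynomial (Fin 2) ℝ),
      (∃ (n : ℕ) (q : Fin n → MvPolynomial (Fin 2) ℝ), s0 = ∑ i, q i ^ 2) ∧
      (C f0 + C f1 * X 0 + C f2 * X 1 : MvPolynomial (Fin 2) ℝ) = s0 + s1 * p := by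
  rintro ⟨s0, s1, ⟨n, q, rfl⟩, heq⟩
  -- evaluate the identity at xs
  have hs0 : eval xs (∑ i, q i ^ 2) = 0 := by
    have := congrArg (eval xs) heq
    simp [hp, hf] at this
    simpa using this.symm
  have key : ∀ j : Fin 2, eval xs (pderiv j (C f0 + C f1 * X 0 + C f2 * X 1 :
      MvPolynomial (Fin 2) ℝ)) = 0 := by
    intro j
    have hj : eval xs (pderiv j p) = 0 := Fin.cases hp1 (fun i => by fin_cases i; exact hp2) j
    rw [heq]
    simp only [map_add, pderiv_mul, map_mul]
    rw [aux_pderiv_sos_eval_zero xs q hs0 j]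
    simp [hp, hj]
  have h1 := key 0
  have h2 := key 1
  simp [pderiv_X, Pi.single_apply] at h1 h2
  exact hflin (by simp [h1, h2])
end

section
/- A vector y = (y₀, y₁, y₂, y₃, y₄) ∈ ℝ⁵ has positive semidefinite 3×3 Hankel matrix H(y) if and only if y is a finite sum of quartic Veronese moment vectors, i.e. there exist finitely many pairs (s_i, t_i) ∈ ℝ² such that y_k = Σᵢ s_i^{4−k} t_i^{k} for k = 0,1,2,3,4. Equivalently, the cone of positive semidefinite 3×3 Hankel matrices is the convex conic hull of the image of the map (s,t) ↦ (s⁴, s³t, s²t², st³, t⁴). -/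
/-- Fourth root helper. -/
noncomputable def fr (a : ℝ) : ℝ := Real.sqrt (Real.sqrt a)

lemma fr_pow4 {a : ℝ} (ha : 0 ≤ a) : fr a ^ 4 = a := by
  have h1 : fr a ^ 2 = Real.sqrt a := Real.sq_sqrt (Real.sqrt_nonneg a)
  have h2 : fr a ^ 4 = (fr a ^ 2) ^ 2 := by ring
  rw [h2, h1, Real.sq_sqrt ha]

lemma quad_zero {A B : ℝ} (hA : 0 ≤ A) (h : ∀ ε : ℝ, 0 ≤ A * ε ^ 2 + B * ε) : B = 0 := by
  by_contra hB
  have hA1 : (0:ℝ) < A + 1 := by linarith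
  have hthis := h (-B / (A + 1))
  rw [div_pow, neg_pow] at hthis
  have e : A * ((-1:ℝ) ^ 2 * B ^ 2 / (A + 1) ^ 2) + B * (-B / (A + 1))
      = -(B ^ 2) / (A + 1) ^ 2 := by field_simp; ring
  rw [e] at hthis
  have hB2 : 0 < B ^ 2 := by positivity
  have : -(B ^ 2) / (A + 1) ^ 2 < 0 := div_neg_of_neg_of_pos (by linarith) (by positivity)
  linarith

/-- The 3×3 Hankel (moment) matrix of a vector `y = (y₀,…,y₄) ∈ ℝ⁵`. -/
def hankel (y : Fin 5 → ℝ) : Matrix (Fin 3) (Fin 3) ℝ :=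
  Matrix.of fun a b => y ⟨(a : ℕ) + (b : ℕ), by have := a.isLt; have := b.isLt; omega⟩

set_option maxHeartbeats 1600000 in
/-- `y ∈ ℝ⁵` has positive semidefinite 3×3 Hankel matrix iff `y` is a
finite sum of quartic Veronese moment vectors `(s⁴, s³t, s²t², st³, t⁴)`. -/
theorem hankel_posSemidef_iff_sum_veronese (y : Fin 5 → ℝ) :
    (hankel y).PosSemidef ↔
    ∃ (n : ℕ) (s t : Fin n → ℝ),
      ∀ k : Fin 5, y k = ∑ i, s i ^ (4 - (k : ℕ)) * t i ^ (k : ℕ) := by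
  constructor
  · intro hH
    have hq : ∀ a b c : ℝ,
        0 ≤ y 0 * a^2 + 2*y 1*a*b + 2*y 2*a*c + y 2*b^2 + 2*y 3*b*c + y 4*c^2 := by
      intro a b c
      have := hH.dotProduct_mulVec_nonneg ![a,b,c]
      simp [hankel, Matrix.mulVec, dotProduct, Fin.sum_univ_three] at this
      convert this using 1
      · rfl
      ring_nf
    have hy0 : 0 ≤ y 0 := by have := hq 1 0 0; linarith
    have hy2 : 0 ≤ y 2 := by have := hq 0 1 0; linarith
    have hy4 : 0 ≤ y 4 := by have := hq 0 0 1; linarith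
    rcases eq_or_lt_of_le hy0 with h0 | h0
    · -- Case A : y 0 = 0
      have h1 : y 1 = 0 := by
        have := quad_zero (A := y 2) (B := 2 * y 1) hy2 (fun e => by have := hq 1 e 0; nlinarith)
        linarith
      have h2 : y 2 = 0 := by
        have := quad_zero (A := y 4) (B := 2 * y 2) hy4 (fun e => by have := hq 1 0 e; nlinarith)
        linarith
      have h3 : y 3 = 0 := by
        have := quad_zero (A := y 4) (B := 2 * y 3) hy4 (fun e => by have := hq 0 1 e; nlinarith)
        linarith
      refine ⟨1, ![0], ![fr (y 4)], ?_⟩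
      intro k
      fin_cases k
      · simp; norm_num [← h0]
      · simp; norm_num [h1]
      · simp; norm_num [h2]
      · simp; norm_num [h3]
      · simp; exact (fr_pow4 hy4).symm
    · -- y 0 > 0
      have hd2 : 0 ≤ y 0 * y 2 - y 1 ^ 2 := by
        have := hq (y 1) (-y 0) 0
        nlinarith
      rcases eq_or_lt_of_le hd2 with hdz | hdp
      · -- Case B : rank-deficient top 2x2
        obtain ⟨x, hxd⟩ : ∃ u : ℝ, u = y 1 / y 0 := ⟨_, rfl⟩
        have hy0ne : y 0 ≠ 0 := ne_of_gt h0
        have hy1x : y 1 = y 0 * x := by rw [hxd]; field_simp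
        have hx2 : y 2 = y 0 * x ^ 2 := by
          rw [hxd]; field_simp; nlinarith [hdz]
        have hB := quad_zero (A := y 4) (B := 2 * (y 2 * x - y 3)) hy4 (fun e => by
          have k := hq x (-1) e
          have e1 : y 1 * x = y 0 * x ^ 2 := by rw [hy1x]; ring
          nlinarith [k, e1, hx2])
        have hx3 : y 3 = y 0 * x ^ 3 := by
          have h23 : y 2 * x = y 3 := by linarith
          linear_combination (-1 : ℝ) * h23 + x * hx2
        have hL : 0 ≤ y 4 - y 0 * x ^ 4 := by
          have k := hq 0 x (-1)
          have e1 : y 2 * x ^ 2 = y 0 * x ^ 4 := by rw [hx2]; ring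
          have e2 : y 3 * x = y 0 * x ^ 4 := by rw [hx3]; ring
          nlinarith [k, e1, e2]
        refine ⟨2, ![fr (y 0), 0], ![fr (y 0) * x, fr (y 4 - y 0 * x ^ 4)], ?_⟩
        intro k
        fin_cases k
        · simp; rw [fr_pow4 hy0]
        · simp
          rw [show fr (y 0) ^ 3 * (fr (y 0) * x) = fr (y 0) ^ 4 * x from by ring, fr_pow4 hy0]
          exact hy1x
        · simp
          rw [show fr (y 0) ^ 2 * (fr (y 0) * x) ^ 2 = fr (y 0) ^ 4 * x ^ 2 from by ring,
            fr_pow4 hy0]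
          exact hx2
        · simp
          rw [show fr (y 0) * (fr (y 0) * x) ^ 3 = fr (y 0) ^ 4 * x ^ 3 from by ring,
            fr_pow4 hy0]
          exact hx3
        · simp
          rw [mul_pow, fr_pow4 hy0, fr_pow4 hL]
          ring
      · -- Case C : top 2x2 positive definite
        have hy0ne : y 0 ≠ 0 := ne_of_gt h0
        obtain ⟨D, hD⟩ : ∃ u : ℝ, u = y 0 * y 2 - y 1 ^ 2 := ⟨_, rfl⟩
        have hDne : D ≠ 0 := by rw [hD]; exact ne_of_gt hdp
        obtain ⟨b, hbd⟩ : ∃ u : ℝ, u = (y 0 * y 3 - y 1 * y 2) / D := ⟨_, rfl⟩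
        obtain ⟨c, hcd⟩ : ∃ u : ℝ, u = (y 2 ^ 2 - y 1 * y 3) / D := ⟨_, rfl⟩
        have hb : y 2 = b * y 1 + c * y 0 := by
          rw [hbd, hcd]; field_simp; linear_combination y 2 * hD
        have hc : y 3 = b * y 2 + c * y 1 := by
          rw [hbd, hcd]; field_simp; linear_combination y 3 * hD
        have hm : (y 1 / y 0) ^ 2 - b * (y 1 / y 0) - c = -D / y 0 ^ 2 := by
          rw [hbd, hcd]; field_simp; rw [hD]; ring
        have hdisc : 0 < b ^ 2 + 4 * c := by
          have e : b ^ 2 + 4 * c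
              = (2 * (y 1 / y 0) - b) ^ 2 - 4 * ((y 1 / y 0) ^ 2 - b * (y 1 / y 0) - c) := by ring
          rw [e, hm, neg_div]
          have : 0 < D / y 0 ^ 2 := div_pos (by rw [hD]; exact hdp) (by positivity)
          nlinarith [sq_nonneg (2 * (y 1 / y 0) - b)]
        obtain ⟨r, hrd⟩ : ∃ u : ℝ, u = Real.sqrt (b ^ 2 + 4 * c) := ⟨_, rfl⟩
        have hr2 : r ^ 2 = b ^ 2 + 4 * c := by rw [hrd]; exact Real.sq_sqrt hdisc.le
        have hrpos : 0 < r := by rw [hrd]; exact Real.sqrt_pos.mpr hdisc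
        have hrne : r ≠ 0 := ne_of_gt hrpos
        obtain ⟨x1, hx1d⟩ : ∃ u : ℝ, u = (b + r) / 2 := ⟨_, rfl⟩
        obtain ⟨x2, hx2d⟩ : ∃ u : ℝ, u = (b - r) / 2 := ⟨_, rfl⟩
        have hx1 : x1 ^ 2 = b * x1 + c := by rw [hx1d]; linear_combination hr2 / 4
        have hx2 : x2 ^ 2 = b * x2 + c := by rw [hx2d]; linear_combination hr2 / 4
        have hx12 : x1 - x2 = r := by rw [hx1d, hx2d]; ring
        have hprod : (y 1 / y 0 - x1) * (y 1 / y 0 - x2) < 0 := by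
          have e : (y 1 / y 0 - x1) * (y 1 / y 0 - x2)
              = (y 1 / y 0) ^ 2 - b * (y 1 / y 0) - c := by
            rw [hx1d, hx2d]; linear_combination (-1 : ℝ) / 4 * hr2
          rw [e, hm]
          exact div_neg_of_neg_of_pos (by linarith) (by positivity)
        have hx21 : x2 < x1 := by rw [hx1d, hx2d]; linarith
        have hmid1 : x2 < y 1 / y 0 := by
          by_contra hcon
          push_neg at hcon
          have f1 : 0 ≤ x2 - y 1 / y 0 := by linarith
          have f2 : 0 ≤ x1 - y 1 / y 0 := by linarith
          nlinarith [mul_nonneg f2 f1, hprod]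
        have hmid2 : y 1 / y 0 < x1 := by
          by_contra hcon
          push_neg at hcon
          have f1 : 0 ≤ y 1 / y 0 - x1 := by linarith
          have f2 : 0 ≤ y 1 / y 0 - x2 := by linarith
          nlinarith [mul_nonneg f1 f2, hprod]
        obtain ⟨l1, hl1d⟩ : ∃ u : ℝ, u = (y 1 - y 0 * x2) / r := ⟨_, rfl⟩
        obtain ⟨l2, hl2d⟩ : ∃ u : ℝ, u = (y 0 * x1 - y 1) / r := ⟨_, rfl⟩
        have hl1 : 0 ≤ l1 := by
          rw [hl1d]
          apply div_nonneg _ hrpos.le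
          have := (lt_div_iff₀ h0).mp hmid1
          linarith
        have hl2 : 0 ≤ l2 := by
          rw [hl2d]
          apply div_nonneg _ hrpos.le
          have := (div_lt_iff₀ h0).mp hmid2
          linarith
        have hm0 : l1 + l2 = y 0 := by
          rw [hl1d, hl2d]; field_simp; linear_combination y 0 * hx12
        have hm1 : l1 * x1 + l2 * x2 = y 1 := by
          rw [hl1d, hl2d]; field_simp; linear_combination y 1 * hx12
        have hm2 : l1 * x1 ^ 2 + l2 * x2 ^ 2 = y 2 := by
          linear_combination l1 * hx1 + l2 * hx2 + b * hm1 + c * hm0 - hb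
        have hm3 : l1 * x1 ^ 3 + l2 * x2 ^ 3 = y 3 := by
          linear_combination (l1 * x1) * hx1 + (l2 * x2) * hx2 + b * hm2 + c * hm1 - hc
        have hm4 : l1 * x1 ^ 4 + l2 * x2 ^ 4 = b * y 3 + c * y 2 := by
          linear_combination (l1 * x1 ^ 2) * hx1 + (l2 * x2 ^ 2) * hx2 + b * hm3 + c * hm2
        have hL : 0 ≤ y 4 - (b * y 3 + c * y 2) := by
          have k := hq c b (-1)
          have e1 : c * y 2 = c * (b * y 1 + c * y 0) := by rw [← hb]
          have e2 : b * y 3 = b * (b * y 2 + c * y 1) := by rw [← hc]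
          linarith [k, e1, e2]
        refine ⟨3, ![fr l1, fr l2, 0], ![fr l1 * x1, fr l2 * x2, fr (y 4 - (b * y 3 + c * y 2))], ?_⟩
        intro k
        fin_cases k
        · simp [Fin.sum_univ_three]
          rw [fr_pow4 hl1, fr_pow4 hl2]
          linarith [hm0]
        · simp [Fin.sum_univ_three]
          rw [show fr l1 ^ 3 * (fr l1 * x1) = fr l1 ^ 4 * x1 from by ring,
              show fr l2 ^ 3 * (fr l2 * x2) = fr l2 ^ 4 * x2 from by ring,
              fr_pow4 hl1, fr_pow4 hl2]
          linarith [hm1]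
        · simp [Fin.sum_univ_three]
          rw [show fr l1 ^ 2 * (fr l1 * x1) ^ 2 = fr l1 ^ 4 * x1 ^ 2 from by ring,
              show fr l2 ^ 2 * (fr l2 * x2) ^ 2 = fr l2 ^ 4 * x2 ^ 2 from by ring,
              fr_pow4 hl1, fr_pow4 hl2]
          linarith [hm2]
        · simp [Fin.sum_univ_three]
          rw [show fr l1 * (fr l1 * x1) ^ 3 = fr l1 ^ 4 * x1 ^ 3 from by ring,
              show fr l2 * (fr l2 * x2) ^ 3 = fr l2 ^ 4 * x2 ^ 3 from by ring,
              fr_pow4 hl1, fr_pow4 hl2]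
          linarith [hm3]
        · simp [Fin.sum_univ_three]
          rw [mul_pow, mul_pow, fr_pow4 hl1, fr_pow4 hl2, fr_pow4 hL]
          linarith [hm4]
  · rintro ⟨n, s, t, h⟩
    have h0 : y 0 = ∑ i, s i ^ 4 * t i ^ 0 := by simpa using h 0
    have h1 : y 1 = ∑ i, s i ^ 3 * t i ^ 1 := by simpa using h 1
    have h2 : y ⟨2, by norm_num⟩ = ∑ i, s i ^ 2 * t i ^ 2 := by simpa using h ⟨2, by norm_num⟩
    have h3 : y ⟨3, by norm_num⟩ = ∑ i, s i ^ 1 * t i ^ 3 := by simpa using h ⟨3, by norm_num⟩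
    have h4 : y ⟨4, by norm_num⟩ = ∑ i, s i ^ 0 * t i ^ 4 := by simpa using h ⟨4, by norm_num⟩
    rw [Matrix.posSemidef_iff_dotProduct_mulVec]
    constructor
    · ext a b
      simp only [hankel, Matrix.conjTranspose_apply, Matrix.of_apply, RCLike.star_def,
        starRingEnd_apply, star_trivial]
      exact congrArg y (Fin.ext (by simp [Nat.add_comm]))
    · intro x
      have key : dotProduct x ((hankel y).mulVec x) =
          ∑ i, (x 0 * s i ^ 2 + x 1 * (s i * t i) + x 2 * t i ^ 2) ^ 2 := by
        simp only [hankel, Matrix.mulVec, dotProduct, Fin.sum_univ_three, Matrix.of_apply,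
          Fin.val_zero, Fin.val_one, Fin.val_two]
        norm_num [h0, h1, h2, h3, h4]
        simp only [Finset.sum_mul, Finset.mul_sum, ← Finset.sum_add_distrib]
        apply Finset.sum_congr rfl
        intro i _
        ring
      simp only [star_trivial]
      rw [key]
      exact Finset.sum_nonneg fun i _ => sq_nonneg _
end

section
/- (Lemma 7, affine form: semidefinite representation of rationally parametrized quartics.) Let p₀, p₁, p₂ be univariate real polynomials of degree at most 4, p_j(t) = Σ_{k=0}^{4} a_{j,k} t^k, such that p₀(t) > 0 for all t ∈ ℝ and a_{0,4} > 0. Let C = {(p₁(t)/p₀(t), p₂(t)/p₀(t)) : t ∈ ℝ} ∪ {(a_{1,4}/a_{0,4}, a_{2,4}/a_{0,4})} (the rationally parametrized curve together with its point at infinity). Then conv(C) = {x ∈ ℝ² : ∃ y ∈ ℝ⁵ with H(y) positive semidefinite, Σ_{k=0}^{4} a_{0,k} y_k = 1, Σ_{k=0}^{4} a_{1,k} y_k = x₁, and Σ_{k=0}^{4} a_{2,k} y_k = x₂}. -/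
lemma lin_zero {B C : ℝ} (h : ∀ u : ℝ, 0 ≤ B * u + C) : B = 0 := by
  by_contra hB
  have h1 := h ((-(C+1))/B)
  rw [mul_div_cancel₀ _ hB] at h1
  linarith

lemma hankel_eq (y : Fin 5 → ℝ) :
    hankel y = !![y 0, y 1, y 2; y 1, y 2, y 3; y 2, y 3, y 4] := by
  ext i j
  fin_cases i <;> fin_cases j <;> rfl

lemma hankel_psd_iff (y : Fin 5 → ℝ) :
    (hankel y).PosSemidef ↔ ∀ u v w : ℝ,
      0 ≤ u*u*y 0 + 2*u*v*y 1 + (v*v+2*u*w)*y 2 + 2*v*w*y 3 + w*w*y 4 := by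
  rw [hankel_eq, Matrix.posSemidef_iff_dotProduct_mulVec]
  constructor
  · intro h u v w
    have := h.2 ![u, v, w]
    simp [Matrix.mulVec, dotProduct, Fin.sum_univ_three] at this
    nlinarith [this]
  · intro h
    refine ⟨?_, fun v => ?_⟩
    · ext i j
      fin_cases i <;> fin_cases j <;> simp [Matrix.conjTranspose_apply]
    · have := h (v 0) (v 1) (v 2)
      simp [Matrix.mulVec, dotProduct, Fin.sum_univ_three]
      nlinarith [this]

lemma sum5 (b : Fin 5 → ℝ) (t : ℝ) :
    ∑ k : Fin 5, b k * t ^ (k : ℕ)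
    = b 0 + b 1 * t + b 2 * t^2 + b 3 * t^3 + b 4 * t^4 := by
  simp [Fin.sum_univ_five]

lemma quad_zero_s9 {B C : ℝ} (hC : 0 ≤ C) (h : ∀ w : ℝ, 0 ≤ 2*B*w + C*w^2) : B = 0 := by
  have h1 := h (-B/(C+1))
  have hC1 : (0:ℝ) < C + 1 := by linarith
  have hpos : (0:ℝ) < (C+1)^2 := by positivity
  have heq : (2*B*(-B/(C+1)) + C*(-B/(C+1))^2) * (C+1)^2 = B^2*(C - 2*(C+1)) := by
    field_simp; ring
  have h2 : 0 ≤ B^2*(C - 2*(C+1)) := heq ▸ mul_nonneg h1 hpos.le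
  have hB2 : B^2 = 0 := by nlinarith [sq_nonneg B]
  exact pow_eq_zero_iff (by norm_num) |>.mp hB2

lemma decomp' (y0 y1 y2 y3 y4 : ℝ)
    (hq : ∀ u v w : ℝ,
      0 ≤ u*u*y0 + 2*u*v*y1 + (v*v+2*u*w)*y2 + 2*v*w*y3 + w*w*y4) :
    ∃ t₁ t₂ l₁ l₂ m : ℝ, 0 ≤ l₁ ∧ 0 ≤ l₂ ∧ 0 ≤ m ∧
      y0 = l₁ + l₂ ∧
      y1 = l₁*t₁ + l₂*t₂ ∧
      y2 = l₁*t₁^2 + l₂*t₂^2 ∧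
      y3 = l₁*t₁^3 + l₂*t₂^3 ∧
      y4 = l₁*t₁^4 + l₂*t₂^4 + m := by
  have hy0 : 0 ≤ y0 := by nlinarith [hq 1 0 0]
  have hy2 : 0 ≤ y2 := by nlinarith [hq 0 1 0]
  have hy4 : 0 ≤ y4 := by nlinarith [hq 0 0 1]
  rcases eq_or_lt_of_le hy0 with h0 | h0
  · have h1 : y1 = 0 := by
      have := lin_zero (B := 2 * y1) (C := y2) fun u => by nlinarith [hq u 1 0, h0]
      linarith
    have h2 : y2 = 0 := by
      have := lin_zero (B := 2 * y2) (C := y4) fun u => by nlinarith [hq u 0 1, h0]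
      linarith
    have h3 : y3 = 0 := by
      have := lin_zero (B := 2 * y3) (C := y4) fun v => by nlinarith [hq 0 v 1, h2]
      linarith
    exact ⟨0, 0, 0, 0, y4, le_refl _, le_refl _, hy4, by linarith, by linarith,
      by linarith, by linarith, by ring⟩
  · have hd : 0 ≤ y0 * y2 - y1 * y1 := by nlinarith [hq y1 (-y0) 0]
    rcases eq_or_lt_of_le hd with hd0 | hd0
    · -- rank-one case
      have hy0ne : y0 ≠ 0 := ne_of_gt h0
      set t : ℝ := y1 / y0 with ht
      have hy1 : y1 = t * y0 := by rw [ht, div_mul_cancel₀ _ hy0ne]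
      have hy2' : y2 = t^2 * y0 := by
        rw [ht]; field_simp; nlinarith [hd0]
      have hy3' : y3 = t^3 * y0 := by
        have hB : t * y2 - y3 = 0 := by
          refine quad_zero_s9 (C := y4) hy4 fun w => ?_
          nlinarith [hq t (-1) w, hy1, hy2']
        have : y3 = t * y2 := by linarith
        rw [this, hy2']; ring
      have hm : 0 ≤ y4 - t^4 * y0 := by
        nlinarith [hq (t^2) 0 (-1), hy2']
      exact ⟨t, 0, y0, 0, y4 - t^4*y0, h0.le, le_refl _, hm, by ring,
        by rw [hy1]; ring, by rw [hy2']; ring, by rw [hy3']; ring, by ring⟩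
    · -- two-atom case
      have hdne : y0 * y2 - y1 * y1 ≠ 0 := ne_of_gt hd0
      obtain ⟨c₀, c₁, hr2, hr3⟩ : ∃ c₀ c₁ : ℝ,
          y2 = c₁ * y1 + c₀ * y0 ∧ y3 = c₁ * y2 + c₀ * y1 :=
        ⟨(y2*y2 - y1*y3)/(y0*y2 - y1*y1), (y0*y3 - y1*y2)/(y0*y2 - y1*y1),
          by rw [div_mul_eq_mul_div, div_mul_eq_mul_div, ← add_div, eq_div_iff hdne]; ring,
          by rw [div_mul_eq_mul_div, div_mul_eq_mul_div, ← add_div, eq_div_iff hdne]; ring⟩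
      have hdisc : 0 < c₁^2 + 4*c₀ := by
        nlinarith [sq_nonneg (y1 - (c₁/2) * y0), hr2, h0, hd0, sq_nonneg y0]
      obtain ⟨t₁, t₂, hsum, hprod, hdiff⟩ : ∃ t₁ t₂ : ℝ,
          t₁ + t₂ = c₁ ∧ t₁ * t₂ = -c₀ ∧ 0 < t₂ - t₁ := by
        refine ⟨(c₁ - Real.sqrt (c₁^2+4*c₀))/2, (c₁ + Real.sqrt (c₁^2+4*c₀))/2,
          by ring, ?_, ?_⟩
        · have := Real.sq_sqrt hdisc.le
          linear_combination (-1/4 : ℝ) * this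
        · have := Real.sqrt_pos.mpr hdisc
          linarith
      have hσne : t₂ - t₁ ≠ 0 := ne_of_gt hdiff
      have hnum₂ : 0 ≤ y0 * t₂ - y1 := by
        have hid : (t₂ - t₁) * (y0 * t₂ - y1) = y2 - 2*t₂*y1 + t₂^2 * y0 := by
          linear_combination y1 * hsum - y0 * hprod - hr2
        have hE2 : 0 < y0 * (y2 - 2*t₂*y1 + t₂^2*y0) := by
          nlinarith [sq_nonneg (y1 - t₂*y0), hd0]
        have hE : 0 < y2 - 2*t₂*y1 + t₂^2*y0 := by
          by_contra hcon; push_neg at hcon; nlinarith [h0, hE2]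
        nlinarith [hid, hdiff, hE]
      have hnum₁ : 0 ≤ y1 - y0 * t₁ := by
        have hid : (t₂ - t₁) * (y1 - y0 * t₁) = y2 - 2*t₁*y1 + t₁^2 * y0 := by
          linear_combination y1 * hsum - y0 * hprod - hr2
        have hE2 : 0 < y0 * (y2 - 2*t₁*y1 + t₁^2*y0) := by
          nlinarith [sq_nonneg (y1 - t₁*y0), hd0]
        have hE : 0 < y2 - 2*t₁*y1 + t₁^2*y0 := by
          by_contra hcon; push_neg at hcon; nlinarith [h0, hE2]
        nlinarith [hid, hdiff, hE]
      obtain ⟨l₁, l₂, hl₁0, hl₂0, he0, he1⟩ : ∃ l₁ l₂ : ℝ, 0 ≤ l₁ ∧ 0 ≤ l₂ ∧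
          y0 = l₁ + l₂ ∧ y1 = l₁*t₁ + l₂*t₂ := by
        refine ⟨(y0*t₂ - y1)/(t₂-t₁), (y1 - y0*t₁)/(t₂-t₁),
          div_nonneg hnum₂ hdiff.le, div_nonneg hnum₁ hdiff.le, ?_, ?_⟩
        · field_simp; ring
        · field_simp; ring
      have k₁ : t₁^2 = c₁*t₁ + c₀ := by linear_combination t₁ * hsum - hprod
      have k₂ : t₂^2 = c₁*t₂ + c₀ := by linear_combination t₂ * hsum - hprod
      have he2 : y2 = l₁*t₁^2 + l₂*t₂^2 := by
        linear_combination hr2 + c₁ * he1 + c₀ * he0 - l₁ * k₁ - l₂ * k₂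
      have he3 : y3 = l₁*t₁^3 + l₂*t₂^3 := by
        linear_combination hr3 + c₁ * he2 + c₀ * he1 - (l₁*t₁) * k₁ - (l₂*t₂) * k₂
      have k₁4 : t₁^4 = c₁^2*t₁^2 + 2*c₀*c₁*t₁ + c₀^2 := by
        linear_combination (t₁^2 + c₁*t₁ + c₀) * k₁
      have k₂4 : t₂^4 = c₁^2*t₂^2 + 2*c₀*c₁*t₂ + c₀^2 := by
        linear_combination (t₂^2 + c₁*t₂ + c₀) * k₂
      have hsum4 : l₁*t₁^4 + l₂*t₂^4 = c₁^2*y2 + 2*c₀*c₁*y1 + c₀^2*y0 := by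
        linear_combination l₁ * k₁4 + l₂ * k₂4 - c₁^2 * he2 - 2*c₀*c₁ * he1 - c₀^2 * he0
      have hF : y4 - (l₁*t₁^4 + l₂*t₂^4)
          = (-c₀)*(-c₀)*y0 + 2*(-c₀)*(-c₁)*y1 + ((-c₁)*(-c₁)+2*(-c₀)*1)*y2
            + 2*(-c₁)*1*y3 + 1*1*y4 := by
        linear_combination - hsum4 + 2*c₁ * hr3 + 2*c₀ * hr2
      have hm : 0 ≤ y4 - (l₁*t₁^4 + l₂*t₂^4) := by
        rw [hF]; exact hq (-c₀) (-c₁) 1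
      exact ⟨t₁, t₂, l₁, l₂, y4 - (l₁*t₁^4 + l₂*t₂^4), hl₁0, hl₂0, hm,
        he0, he1, he2, he3, by ring⟩

/-- Lemma 7, affine form: semidefinite representation of the convex
hull of a rationally parametrized quartic curve.  The curve is
`C = {(p₁(t)/p₀(t), p₂(t)/p₀(t)) : t ∈ ℝ}` together with its point at infinity
`(a₁₄/a₀₄, a₂₄/a₀₄)`, where `p_j(t) = ∑ₖ a_{j,k} tᵏ`, assuming `p₀ > 0` on `ℝ`
and `a₀₄ > 0`.  Its convex hull is the projection of a slice of the cone of
positive semidefinite 3×3 Hankel matrices. -/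
theorem convexHull_rational_quartic_sdp (a : Fin 3 → Fin 5 → ℝ)
    (hp0 : ∀ t : ℝ, 0 < ∑ k : Fin 5, a 0 k * t ^ (k : ℕ))
    (hlead : 0 < a 0 4) :
    convexHull ℝ
      ({x : ℝ × ℝ | ∃ t : ℝ,
          x.1 = (∑ k : Fin 5, a 1 k * t ^ (k : ℕ)) / (∑ k : Fin 5, a 0 k * t ^ (k : ℕ)) ∧
          x.2 = (∑ k : Fin 5, a 2 k * t ^ (k : ℕ)) / (∑ k : Fin 5, a 0 k * t ^ (k : ℕ))}
        ∪ {(a 1 4 / a 0 4, a 2 4 / a 0 4)})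
    = {x : ℝ × ℝ | ∃ y : Fin 5 → ℝ, (hankel y).PosSemidef ∧
        (∑ k : Fin 5, a 0 k * y k) = 1 ∧
        (∑ k : Fin 5, a 1 k * y k) = x.1 ∧
        (∑ k : Fin 5, a 2 k * y k) = x.2} := by
  have halead : a 0 4 ≠ 0 := ne_of_gt hlead
  apply Set.Subset.antisymm
  · apply convexHull_min
    · rintro x (⟨t, hx1, hx2⟩ | hx)
      · -- curve point
        have hP := hp0 t
        have hPne : (∑ k : Fin 5, a 0 k * t ^ (k : ℕ)) ≠ 0 := ne_of_gt hP
        have hdiv : ∀ j : Fin 3,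
            (∑ k : Fin 5, a j k * (t ^ (k : ℕ) / (∑ k : Fin 5, a 0 k * t ^ (k : ℕ))))
            = (∑ k : Fin 5, a j k * t ^ (k : ℕ)) / (∑ k : Fin 5, a 0 k * t ^ (k : ℕ)) := by
          intro j
          rw [Finset.sum_div]
          exact Finset.sum_congr rfl fun k _ => (mul_div_assoc _ _ _).symm
        refine ⟨fun k => t ^ (k : ℕ) / (∑ k : Fin 5, a 0 k * t ^ (k : ℕ)), ?_,
          (hdiv 0).trans (div_self hPne), (hdiv 1).trans hx1.symm, (hdiv 2).trans hx2.symm⟩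
        rw [hankel_psd_iff]
        intro u v w
        show 0 ≤ u*u*(t^(0:ℕ)/_) + 2*u*v*(t^(1:ℕ)/_) + (v*v+2*u*w)*(t^(2:ℕ)/_)
            + 2*v*w*(t^(3:ℕ)/_) + w*w*(t^(4:ℕ)/_)
        have heq : u*u*(t^(0:ℕ)/(∑ k : Fin 5, a 0 k * t ^ (k : ℕ)))
            + 2*u*v*(t^(1:ℕ)/(∑ k : Fin 5, a 0 k * t ^ (k : ℕ)))
            + (v*v+2*u*w)*(t^(2:ℕ)/(∑ k : Fin 5, a 0 k * t ^ (k : ℕ)))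
            + 2*v*w*(t^(3:ℕ)/(∑ k : Fin 5, a 0 k * t ^ (k : ℕ)))
            + w*w*(t^(4:ℕ)/(∑ k : Fin 5, a 0 k * t ^ (k : ℕ)))
            = (u + v*t + w*t^2)^2 / (∑ k : Fin 5, a 0 k * t ^ (k : ℕ)) := by
          field_simp; ring
        rw [heq]
        positivity
      · -- point at infinity
        rw [Set.mem_singleton_iff] at hx
        subst hx
        have hif : ∀ j : Fin 3,
            (∑ k : Fin 5, a j k * (if k = 4 then 1 / a 0 4 else 0)) = a j 4 / a 0 4 := by
          intro j
          rw [Fin.sum_univ_five, if_neg (by decide : ¬((0:Fin 5) = 4)),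
            if_neg (by decide : ¬((1:Fin 5) = 4)), if_neg (by decide : ¬((2:Fin 5) = 4)),
            if_neg (by decide : ¬((3:Fin 5) = 4)), if_pos rfl]
          rw [mul_one_div]
          ring
        refine ⟨fun k => if k = 4 then 1 / a 0 4 else 0, ?_,
          (hif 0).trans (div_self halead), hif 1, hif 2⟩
        rw [hankel_psd_iff]
        intro u v w
        show 0 ≤ u*u*(if (0:Fin 5) = 4 then 1 / a 0 4 else 0)
            + 2*u*v*(if (1:Fin 5) = 4 then 1 / a 0 4 else 0)
            + (v*v+2*u*w)*(if (2:Fin 5) = 4 then 1 / a 0 4 else 0)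
            + 2*v*w*(if (3:Fin 5) = 4 then 1 / a 0 4 else 0)
            + w*w*(if (4:Fin 5) = 4 then 1 / a 0 4 else 0)
        rw [if_neg (by decide : ¬((0:Fin 5) = 4)), if_neg (by decide : ¬((1:Fin 5) = 4)),
          if_neg (by decide : ¬((2:Fin 5) = 4)), if_neg (by decide : ¬((3:Fin 5) = 4)),
          if_pos rfl]
        have : (0:ℝ) ≤ w * w * (1 / a 0 4) :=
          mul_nonneg (mul_self_nonneg w) (by positivity)
        nlinarith [this]
    · -- convexity of the SDP set
      rintro p ⟨y, hy, hy0, hy1, hy2⟩ q ⟨z, hz, hz0, hz1, hz2⟩ θ σ hθ hσ hθσ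
      have hlin : ∀ j : Fin 3, (∑ k : Fin 5, a j k * (θ * y k + σ * z k))
          = θ * (∑ k : Fin 5, a j k * y k) + σ * (∑ k : Fin 5, a j k * z k) := by
        intro j
        rw [Finset.mul_sum, Finset.mul_sum, ← Finset.sum_add_distrib]
        exact Finset.sum_congr rfl fun k _ => by ring
      refine ⟨fun k => θ * y k + σ * z k, ?_, ?_, ?_, ?_⟩
      · rw [hankel_psd_iff]
        intro u v w
        have h1 := (hankel_psd_iff y).1 hy u v w
        have h2 := (hankel_psd_iff z).1 hz u v w
        show 0 ≤ u*u*(θ * y 0 + σ * z 0) + 2*u*v*(θ * y 1 + σ * z 1)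
            + (v*v+2*u*w)*(θ * y 2 + σ * z 2) + 2*v*w*(θ * y 3 + σ * z 3)
            + w*w*(θ * y 4 + σ * z 4)
        nlinarith [mul_nonneg hθ h1, mul_nonneg hσ h2]
      · rw [hlin 0, hy0, hz0]; linarith
      · rw [hlin 1, hy1, hz1]; simp
      · rw [hlin 2, hy2, hz2]; simp
  · -- SDP set ⊆ convex hull
    rintro x ⟨y, hpsd, h0, h1, h2⟩
    obtain ⟨t₁, t₂, l₁, l₂, m, hl₁, hl₂, hm, e0, e1, e2, e3, e4⟩ :=
      decomp' (y 0) (y 1) (y 2) (y 3) (y 4) ((hankel_psd_iff y).1 hpsd)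
    have hP₁ := hp0 t₁
    have hP₂ := hp0 t₂
    have cancel : ∀ (L P Q : ℝ), P ≠ 0 → (L * P) * (Q / P) = L * Q := by
      intro L P Q hP; field_simp
    have key : ∀ j : Fin 3, (∑ k : Fin 5, a j k * y k)
        = (l₁ * (∑ k : Fin 5, a 0 k * t₁ ^ (k:ℕ)))
            * ((∑ k : Fin 5, a j k * t₁ ^ (k:ℕ))/(∑ k : Fin 5, a 0 k * t₁ ^ (k:ℕ)))
        + (l₂ * (∑ k : Fin 5, a 0 k * t₂ ^ (k:ℕ)))
            * ((∑ k : Fin 5, a j k * t₂ ^ (k:ℕ))/(∑ k : Fin 5, a 0 k * t₂ ^ (k:ℕ)))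
        + (m * a 0 4) * (a j 4 / a 0 4) := by
      intro j
      rw [cancel _ _ _ (ne_of_gt hP₁), cancel _ _ _ (ne_of_gt hP₂), cancel _ _ _ halead,
        Fin.sum_univ_five, sum5, sum5]
      linear_combination a j 0 * e0 + a j 1 * e1 + a j 2 * e2 + a j 3 * e3 + a j 4 * e4
    have hwsum : (l₁ * (∑ k : Fin 5, a 0 k * t₁ ^ (k:ℕ)))
        + (l₂ * (∑ k : Fin 5, a 0 k * t₂ ^ (k:ℕ))) + (m * a 0 4) = 1 := by
      rw [Fin.sum_univ_five] at h0
      rw [sum5, sum5]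
      linear_combination h0 - a 0 0 * e0 - a 0 1 * e1 - a 0 2 * e2 - a 0 3 * e3 - a 0 4 * e4
    have hxeq : x = ∑ i : Fin 3,
        (![l₁ * (∑ k : Fin 5, a 0 k * t₁ ^ (k:ℕ)),
           l₂ * (∑ k : Fin 5, a 0 k * t₂ ^ (k:ℕ)), m * a 0 4]) i •
        (![((∑ k : Fin 5, a 1 k * t₁ ^ (k:ℕ))/(∑ k : Fin 5, a 0 k * t₁ ^ (k:ℕ)),
            (∑ k : Fin 5, a 2 k * t₁ ^ (k:ℕ))/(∑ k : Fin 5, a 0 k * t₁ ^ (k:ℕ))),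
           ((∑ k : Fin 5, a 1 k * t₂ ^ (k:ℕ))/(∑ k : Fin 5, a 0 k * t₂ ^ (k:ℕ)),
            (∑ k : Fin 5, a 2 k * t₂ ^ (k:ℕ))/(∑ k : Fin 5, a 0 k * t₂ ^ (k:ℕ))),
           (a 1 4 / a 0 4, a 2 4 / a 0 4)]) i := by
      rw [Fin.sum_univ_three]
      apply Prod.ext
      · simp only [Matrix.cons_val_zero, Matrix.cons_val_one, Matrix.head_cons,
          Matrix.cons_val_two, Matrix.tail_cons, Prod.fst_add, Prod.smul_fst, smul_eq_mul]
        rw [← h1]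
        exact key 1
      · simp only [Matrix.cons_val_zero, Matrix.cons_val_one, Matrix.head_cons,
          Matrix.cons_val_two, Matrix.tail_cons, Prod.snd_add, Prod.smul_snd, smul_eq_mul]
        rw [← h2]
        exact key 2
    rw [hxeq]
    apply Convex.sum_mem (convex_convexHull ℝ _)
    · intro i _
      fin_cases i
      · exact mul_nonneg hl₁ hP₁.le
      · exact mul_nonneg hl₂ hP₂.le
      · exact mul_nonneg hm hlead.le
    · rw [Fin.sum_univ_three]; exact hwsum
    · intro i _
      fin_cases i
      · exact subset_convexHull ℝ _ (Or.inl ⟨t₁, rfl, rfl⟩)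
      · exact subset_convexHull ℝ _ (Or.inl ⟨t₂, rfl, rfl⟩)
      · exact subset_convexHull ℝ _ (Or.inr rfl)
end

section
/- (Semidefinite representation of the folium convex hull with 2 liftings.) Let p(x) = −x₁(x₁² − 2x₂²) − (x₁² + x₂²)² be the folium quartic and C = {x ∈ ℝ² : p(x) = 0}. Then conv(C) = {x ∈ ℝ² : ∃ (y₀, y₁) ∈ ℝ² such that the matrix [[2y₀, 2y₁, x₁ + y₀], [2y₁, x₁ + y₀, x₂ + y₁], [x₁ + y₀, x₂ + y₁, 2 − 2x₁ − 4y₀]] is positive semidefinite}. -/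
open Matrix

lemma quadform_hankel (m0 m1 m2 m3 m4 : ℝ) (z : Fin 3 → ℝ) :
    star z ⬝ᵥ ((!![m0,m1,m2;m1,m2,m3;m2,m3,m4] : Matrix (Fin 3) (Fin 3) ℝ) *ᵥ z)
      = m0*(z 0)^2 + m2*(z 1)^2 + m4*(z 2)^2
        + 2*m1*(z 0)*(z 1) + 2*m2*(z 0)*(z 2) + 2*m3*(z 1)*(z 2) := by
  simp [Matrix.mulVec, dotProduct, Fin.sum_univ_three]
  ring

lemma psd_of_quad (m0 m1 m2 m3 m4 : ℝ)
    (h : ∀ z : Fin 3 → ℝ, 0 ≤ m0*(z 0)^2 + m2*(z 1)^2 + m4*(z 2)^2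
        + 2*m1*(z 0)*(z 1) + 2*m2*(z 0)*(z 2) + 2*m3*(z 1)*(z 2)) :
    (!![m0,m1,m2;m1,m2,m3;m2,m3,m4] : Matrix (Fin 3) (Fin 3) ℝ).PosSemidef := by
  refine Matrix.posSemidef_iff_dotProduct_mulVec.mpr ⟨?_, ?_⟩
  · ext i j
    fin_cases i <;> fin_cases j <;> simp [Matrix.conjTranspose, Matrix.vecHead, Matrix.vecTail]
  · intro z
    rw [quadform_hankel]
    exact h z

lemma quad_of_psd {m0 m1 m2 m3 m4 : ℝ}
    (h : (!![m0,m1,m2;m1,m2,m3;m2,m3,m4] : Matrix (Fin 3) (Fin 3) ℝ).PosSemidef)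
    (a b c : ℝ) :
    0 ≤ m0*a^2 + m2*b^2 + m4*c^2 + 2*m1*a*b + 2*m2*a*c + 2*m3*b*c := by
  have := h.dotProduct_mulVec_nonneg ![a,b,c]
  rw [quadform_hankel] at this
  simpa using this

lemma sq_lin (A B : ℝ) (hA : 0 ≤ A) (h : ∀ e : ℝ, 0 ≤ A*e^2 + 2*B*e) : B = 0 := by
  have hA1 : (0:ℝ) < A + 1 := by linarith
  have h1 := h (-(B/(A+1)))
  have key : A*(-(B/(A+1)))^2 + 2*B*(-(B/(A+1))) = -(B^2*(A+2))/(A+1)^2 := by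
    field_simp
    ring
  rw [key] at h1
  have h2 : B^2*(A+2) ≤ 0 := by
    by_contra hc
    push_neg at hc
    have : -(B^2*(A+2))/(A+1)^2 < 0 := div_neg_of_neg_of_pos (by linarith) (by positivity)
    linarith
  have h3 : B^2 = 0 := by nlinarith [sq_nonneg B]
  exact (pow_eq_zero_iff two_ne_zero).mp h3

set_option maxHeartbeats 3200000 in
lemma quad_decomp (m0 m1 m2 m3 m4 : ℝ)
    (hq : ∀ a b c : ℝ, 0 ≤ m0*a^2 + m2*b^2 + m4*c^2 + 2*m1*a*b + 2*m2*a*c + 2*m3*b*c) :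
    ∃ l1 u1 v1 l2 u2 v2 l3 u3 v3 : ℝ,
      0 ≤ l1 ∧ 0 ≤ l2 ∧ 0 ≤ l3 ∧
      m0 = l1*u1^4 + l2*u2^4 + l3*u3^4 ∧
      m1 = l1*u1^3*v1 + l2*u2^3*v2 + l3*u3^3*v3 ∧
      m2 = l1*u1^2*v1^2 + l2*u2^2*v2^2 + l3*u3^2*v3^2 ∧
      m3 = l1*u1*v1^3 + l2*u2*v2^3 + l3*u3*v3^3 ∧
      m4 = l1*v1^4 + l2*v2^4 + l3*v3^4 := by
  have hm0 : 0 ≤ m0 := by nlinarith [hq 1 0 0]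
  have hm2 : 0 ≤ m2 := by nlinarith [hq 0 1 0]
  have hm4 : 0 ≤ m4 := by nlinarith [hq 0 0 1]
  rcases eq_or_lt_of_le hm0 with h0 | h0
  · -- m0 = 0
    have hm1 : m1 = 0 := sq_lin m2 m1 hm2 (fun e => by nlinarith [hq 1 e 0, h0])
    have hm2' : m2 = 0 := sq_lin m4 m2 hm4 (fun e => by nlinarith [hq 1 0 e, h0])
    have hm3 : m3 = 0 := sq_lin m4 m3 hm4 (fun e => by nlinarith [hq 0 1 e, hm2'])
    exact ⟨m4, 0, 1, 0, 0, 1, 0, 0, 1, hm4, le_refl 0, le_refl 0,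
      by rw [← h0]; ring, by rw [hm1]; ring, by rw [hm2']; ring, by rw [hm3]; ring, by ring⟩
  · -- 0 < m0
    have hd0 : 0 ≤ m0*m2 - m1^2 := by
      by_contra hc
      push_neg at hc
      nlinarith [hq (-m1) m0 0]
    rcases eq_or_lt_of_le hd0 with hd | hd
    · -- m0*m2 = m1^2
      replace hd : m0*m2 - m1^2 = 0 := hd.symm
      have hd' : m0*(m0*m2 - m1^2) = 0 := by rw [hd]; ring
      have hrel : m1*m2 - m0*m3 = 0 :=
        sq_lin m4 (m1*m2 - m0*m3) hm4 (fun e => by nlinarith [hq m1 (-m0) e, hd'])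
      have hd'' : m1^2*m0*(m0*m2 - m1^2) = 0 := by rw [hd]; ring
      have hl2 : m1^4 ≤ m0^3*m4 := by
        by_contra hc
        push_neg at hc
        nlinarith [hq (m1^2) 0 (-(m0^2)), hd'']
      have hm0ne : m0 ≠ 0 := ne_of_gt h0
      refine ⟨m0, 1, m1/m0, m4 - m1^4/m0^3, 0, 1, 0, 0, 1, le_of_lt h0, ?_, le_refl 0,
        ?_, ?_, ?_, ?_, ?_⟩
      · rw [sub_nonneg, div_le_iff₀ (by positivity)]
        nlinarith [hl2]
      · ring
      · field_simp
        ring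
      · field_simp
        linear_combination m0^2*hd
      · field_simp
        linear_combination (-(m0^2))*hrel + m0*m1*hd
      · field_simp
        ring
    · -- m0*m2 - m1^2 > 0
      have hdne : m0*m2 - m1^2 ≠ 0 := ne_of_gt hd
      obtain ⟨σ, hσ⟩ : ∃ q : ℝ, q = (m0*m3 - m1*m2)/(m0*m2 - m1^2) := ⟨_, rfl⟩
      obtain ⟨π, hπ⟩ : ∃ q : ℝ, q = (m1*m3 - m2^2)/(m0*m2 - m1^2) := ⟨_, rfl⟩
      have hR1 : m1*σ - m0*π = m2 := by
        rw [hσ, hπ]; field_simp; ring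
      have hR2 : m2*σ - m1*π = m3 := by
        rw [hσ, hπ, mul_div_assoc', mul_div_assoc', div_sub_div_same, div_eq_iff hdne]; ring
      have hkeyD : m0^2*((σ^2 - 4*π)*(m0*m2 - m1^2)^2)
          = (m0^2*m3 - m0*m1*m2 - 2*(m0*m2 - m1^2)*m1)^2 + 4*(m0*m2 - m1^2)^3 := by
        rw [hσ, hπ]; field_simp; ring
      have hDpos : 0 < m0^2*((σ^2 - 4*π)*(m0*m2 - m1^2)^2) := by
        rw [hkeyD]
        nlinarith [sq_nonneg (m0^2*m3 - m0*m1*m2 - 2*(m0*m2 - m1^2)*m1), pow_pos hd 3]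
      have hD : 0 < σ^2 - 4*π := by
        by_contra hc
        push_neg at hc
        have hprod : 0 ≤ (-(σ^2 - 4*π)) * (m0^2*(m0*m2 - m1^2)^2) :=
          mul_nonneg (by linarith) (by positivity)
        nlinarith [hDpos, hprod]
      obtain ⟨s, hs⟩ : ∃ q : ℝ, q = Real.sqrt (σ^2 - 4*π) := ⟨_, rfl⟩
      have hspos : 0 < s := by rw [hs]; exact Real.sqrt_pos.mpr hD
      have hs2 : s^2 = σ^2 - 4*π := by rw [hs]; exact Real.sq_sqrt hD.le
      have hsne : s ≠ 0 := ne_of_gt hspos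
      clear hkeyD hDpos hD hs hσ hπ
      obtain ⟨t1, ht1⟩ : ∃ q : ℝ, q = (σ + s)/2 := ⟨_, rfl⟩
      obtain ⟨t2, ht2⟩ : ∃ q : ℝ, q = (σ - s)/2 := ⟨_, rfl⟩
      have hst : t1 - t2 = s := by rw [ht1, ht2]; ring
      have ht1q : t1^2 = σ*t1 - π := by rw [ht1]; linear_combination (1/4)*hs2
      have ht2q : t2^2 = σ*t2 - π := by rw [ht2]; linear_combination (1/4)*hs2
      have S0 : (m1 - m0*t2) + (m0*t1 - m1) = m0*s := by
        rw [ht1, ht2]; ring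
      have S1 : (m1 - m0*t2)*t1 + (m0*t1 - m1)*t2 = m1*s := by
        rw [ht1, ht2]; ring
      have S2 : (m1 - m0*t2)*t1^2 + (m0*t1 - m1)*t2^2 = m2*s := by
        linear_combination (m1 - m0*t2)*ht1q + (m0*t1 - m1)*ht2q + σ*S1 - π*S0 + s*hR1
      have S3 : (m1 - m0*t2)*t1^3 + (m0*t1 - m1)*t2^3 = m3*s := by
        linear_combination ((m1 - m0*t2)*t1)*ht1q + ((m0*t1 - m1)*t2)*ht2q + σ*S2 - π*S1 + s*hR2
      have S4 : (m1 - m0*t2)*t1^4 + (m0*t1 - m1)*t2^4 = (m3*σ - m2*π)*s := by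
        linear_combination ((m1 - m0*t2)*t1^2)*ht1q + ((m0*t1 - m1)*t2^2)*ht2q + σ*S3 - π*S2
      have key1 : s*(m1 - m0*t2) = m0*t2^2 - 2*m1*t2 + m2 := by
        rw [ht2]; linear_combination (m0/4)*hs2 + hR1
      have key2 : s*(m0*t1 - m1) = m0*t1^2 - 2*m1*t1 + m2 := by
        rw [ht1]; linear_combination (m0/4)*hs2 + hR1
      have q2pos : 0 < m0*t2^2 - 2*m1*t2 + m2 := by
        have hpos2 : 0 < m0*(m0*t2^2 - 2*m1*t2 + m2) := by
          nlinarith [sq_nonneg (m0*t2 - m1), hd]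
        rcases mul_pos_iff.mp hpos2 with ⟨_, h⟩ | ⟨h', _⟩
        · exact h
        · linarith
      have q1pos : 0 < m0*t1^2 - 2*m1*t1 + m2 := by
        have hpos2 : 0 < m0*(m0*t1^2 - 2*m1*t1 + m2) := by
          nlinarith [sq_nonneg (m0*t1 - m1), hd]
        rcases mul_pos_iff.mp hpos2 with ⟨_, h⟩ | ⟨h', _⟩
        · exact h
        · linarith
      have hl1 : 0 < m1 - m0*t2 := by
        have hpos2 : 0 < s*(m1 - m0*t2) := by rw [key1]; exact q2pos
        rcases mul_pos_iff.mp hpos2 with ⟨_, h⟩ | ⟨h', _⟩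
        · exact h
        · linarith
      have hl2 : 0 < m0*t1 - m1 := by
        have hpos2 : 0 < s*(m0*t1 - m1) := by rw [key2]; exact q1pos
        rcases mul_pos_iff.mp hpos2 with ⟨_, h⟩ | ⟨h', _⟩
        · exact h
        · linarith
      have a1 : π*(m1*σ - m0*π) = π*m2 := by rw [hR1]
      have a2 : σ*(m2*σ - m1*π) = σ*m3 := by rw [hR2]
      have hl3 : 0 ≤ m4 + m2*π - m3*σ := by
        nlinarith [hq π (-σ) 1, a1, a2]
      refine ⟨(m1 - m0*t2)/s, 1, t1, (m0*t1 - m1)/s, 1, t2, m4 + m2*π - m3*σ, 0, 1,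
        div_nonneg hl1.le hspos.le, div_nonneg hl2.le hspos.le, hl3, ?_, ?_, ?_, ?_, ?_⟩
      · have G : m0 = ((m1 - m0*t2) + (m0*t1 - m1))/s := by
          rw [eq_div_iff hsne]; linear_combination -S0
        linear_combination G
      · have G : m1 = ((m1 - m0*t2)*t1 + (m0*t1 - m1)*t2)/s := by
          rw [eq_div_iff hsne]; linear_combination -S1
        linear_combination G
      · have G : m2 = ((m1 - m0*t2)*t1^2 + (m0*t1 - m1)*t2^2)/s := by
          rw [eq_div_iff hsne]; linear_combination -S2
        linear_combination G
      · have G : m3 = ((m1 - m0*t2)*t1^3 + (m0*t1 - m1)*t2^3)/s := by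
          rw [eq_div_iff hsne]; linear_combination -S3
        linear_combination G
      · have G : m4 - (m4 + m2*π - m3*σ) = ((m1 - m0*t2)*t1^4 + (m0*t1 - m1)*t2^4)/s := by
          rw [eq_div_iff hsne]; linear_combination -S4
        linear_combination G

lemma pt_mem (u v : ℝ) :
    ((u^2*(2*v^2-u^2)/(u^2+v^2)^2, u*v*(2*v^2-u^2)/(u^2+v^2)^2) : ℝ×ℝ) ∈
      {x : ℝ × ℝ | -x.1 * (x.1 ^ 2 - 2 * x.2 ^ 2) - (x.1 ^ 2 + x.2 ^ 2) ^ 2 = 0} := by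
  simp only [Set.mem_setOf_eq]
  rcases eq_or_ne (u^2+v^2) 0 with h | h
  · have hu : u = 0 := by nlinarith [sq_nonneg u, sq_nonneg v]
    simp [hu]
  · field_simp
    ring

lemma wt_mul_fst (l u v : ℝ) :
    (l*(u^2+v^2)^2/2) * (u^2*(2*v^2-u^2)/(u^2+v^2)^2) = l*u^2*v^2 - l*u^4/2 := by
  rcases eq_or_ne (u^2+v^2) 0 with h | h
  · have hu : u = 0 := by nlinarith [sq_nonneg u, sq_nonneg v]
    rw [hu]; ring_nf
  · field_simp

lemma wt_mul_snd (l u v : ℝ) :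
    (l*(u^2+v^2)^2/2) * (u*v*(2*v^2-u^2)/(u^2+v^2)^2) = l*u*v^3 - l*u^3*v/2 := by
  rcases eq_or_ne (u^2+v^2) 0 with h | h
  · have hu : u = 0 := by nlinarith [sq_nonneg u, sq_nonneg v]
    rw [hu]; ring_nf
  · field_simp

lemma comb3 {s : Set (ℝ×ℝ)} {p1 p2 p3 : ℝ×ℝ} {t1 t2 t3 : ℝ}
    (hp1 : p1 ∈ s) (hp2 : p2 ∈ s) (hp3 : p3 ∈ s)
    (h1 : 0 ≤ t1) (h2 : 0 ≤ t2) (h3 : 0 ≤ t3) (hsum : t1 + t2 + t3 = 1) :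
    t1 • p1 + t2 • p2 + t3 • p3 ∈ convexHull ℝ s := by
  have h := Finset.centerMass_mem_convexHull (Finset.univ : Finset (Fin 3))
      (w := ![t1,t2,t3]) (z := ![p1,p2,p3])
      (fun i _ => by fin_cases i <;> assumption)
      (by simp [Fin.sum_univ_three, hsum])
      (fun i _ => by fin_cases i <;> assumption)
  simpa [Finset.centerMass, Fin.sum_univ_three, hsum] using h

set_option maxHeartbeats 3200000 in
/-- semidefinite representation, with 2 lifting variables, of the
convex hull of the folium quartic `p(x) = -x₁(x₁² - 2x₂²) - (x₁² + x₂²)²`. -/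
theorem folium_convexHull_sdp :
    convexHull ℝ
        {x : ℝ × ℝ | -x.1 * (x.1 ^ 2 - 2 * x.2 ^ 2) - (x.1 ^ 2 + x.2 ^ 2) ^ 2 = 0}
    = {x : ℝ × ℝ | ∃ y0 y1 : ℝ,
        (!![2 * y0,      2 * y1,      x.1 + y0;
            2 * y1,      x.1 + y0,    x.2 + y1;
            x.1 + y0,    x.2 + y1,    2 - 2 * x.1 - 4 * y0] :
          Matrix (Fin 3) (Fin 3) ℝ).PosSemidef} := by
  apply Set.Subset.antisymm
  · apply convexHull_min
    · intro x hx
      simp only [Set.mem_setOf_eq] at hx ⊢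
      rcases eq_or_ne (x.1^2 + x.2^2) 0 with h | h
      · have hx1 : x.1 = 0 := by nlinarith [sq_nonneg x.1, sq_nonneg x.2]
        have hx2 : x.2 = 0 := by nlinarith [sq_nonneg x.1, sq_nonneg x.2]
        exact ⟨0, 0, psd_of_quad _ _ _ _ _ (fun z => by
          rw [hx1, hx2]; nlinarith [sq_nonneg (z 2)])⟩
      · have hr2pos : 0 < x.1^2 + x.2^2 := lt_of_le_of_ne (by positivity) (Ne.symm h)
        obtain ⟨r, hrdef⟩ : ∃ q : ℝ, q = Real.sqrt (x.1^2 + x.2^2) := ⟨_, rfl⟩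
        have hr : 0 < r := by rw [hrdef]; exact Real.sqrt_pos.mpr hr2pos
        have hr2 : r^2 = x.1^2 + x.2^2 := by rw [hrdef]; exact Real.sq_sqrt hr2pos.le
        have hrne : r ≠ 0 := ne_of_gt hr
        obtain ⟨c, hcdef⟩ : ∃ q : ℝ, q = x.1/r := ⟨_, rfl⟩
        obtain ⟨sn, hsndef⟩ : ∃ q : ℝ, q = x.2/r := ⟨_, rfl⟩
        have hx1r : x.1 = r*c := by rw [hcdef]; field_simp
        have hx2r : x.2 = r*sn := by rw [hsndef]; field_simp
        have hcs : c^2 + sn^2 = 1 := by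
          rw [hcdef, hsndef]; field_simp; linear_combination -hr2
        have hkey : r^3*(r - c*(2*sn^2 - c^2)) = 0 := by
          rw [hcdef, hsndef]; field_simp
          linear_combination (r^2 + x.1^2 + x.2^2)*hr2 - hx
        have hrval : r = c*(2*sn^2 - c^2) := by
          rcases mul_eq_zero.mp hkey with h' | h'
          · exact absurd h' (pow_ne_zero 3 hrne)
          · exact sub_eq_zero.mp h'
        have hx1v : x.1 = c^2*(2*sn^2 - c^2) := by rw [hx1r, hrval]; ring
        have hx2v : x.2 = c*sn*(2*sn^2 - c^2) := by rw [hx2r, hrval]; ring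
        refine ⟨c^4, c^3*sn, psd_of_quad _ _ _ _ _ (fun z => ?_)⟩
        have key : (2*c^4)*(z 0)^2 + (x.1 + c^4)*(z 1)^2 + (2 - 2*x.1 - 4*c^4)*(z 2)^2
            + 2*(2*(c^3*sn))*(z 0)*(z 1) + 2*(x.1 + c^4)*(z 0)*(z 2)
            + 2*(x.2 + c^3*sn)*(z 1)*(z 2)
            = 2*(c^2*z 0 + c*sn*z 1 + sn^2*z 2)^2 := by
          linear_combination ((z 1)^2 + 2*(z 0)*(z 2) - 2*(z 2)^2)*hx1v
            + (2*(z 1)*(z 2))*hx2v - (2*(z 2)^2*(1 + c^2 + sn^2))*hcs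
        rw [key]
        positivity
    · intro p hp q hq' a b ha hb hab
      obtain ⟨p0, p1, hP⟩ := hp
      obtain ⟨q0, q1, hQ⟩ := hq'
      refine ⟨a*p0 + b*q0, a*p1 + b*q1, psd_of_quad _ _ _ _ _ (fun z => ?_)⟩
      have h1 := quad_of_psd hP (z 0) (z 1) (z 2)
      have h2 := quad_of_psd hQ (z 0) (z 1) (z 2)
      have hfst : (a • p + b • q).1 = a*p.1 + b*q.1 := by
        simp [Prod.smul_fst, Prod.fst_add]
      have hsnd : (a • p + b • q).2 = a*p.2 + b*q.2 := by
        simp [Prod.smul_snd, Prod.snd_add]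
      rw [hfst, hsnd]
      have h3 : (1 - a - b)*(2*(z 2)^2) = 0 := by
        have : 1 - a - b = 0 := by linarith
        rw [this]; ring
      nlinarith [mul_nonneg ha h1, mul_nonneg hb h2, h3]
  · intro x hx
    obtain ⟨y0, y1, hpsd⟩ := hx
    have hq := quad_of_psd hpsd
    obtain ⟨l1,u1,v1,l2,u2,v2,l3,u3,v3,h1,h2,h3,e0,e1,e2,e3,e4⟩ := quad_decomp _ _ _ _ _ hq
    have hxeq : x = (l1*(u1^2+v1^2)^2/2) •
          ((u1^2*(2*v1^2-u1^2)/(u1^2+v1^2)^2, u1*v1*(2*v1^2-u1^2)/(u1^2+v1^2)^2) : ℝ×ℝ)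
        + (l2*(u2^2+v2^2)^2/2) •
          ((u2^2*(2*v2^2-u2^2)/(u2^2+v2^2)^2, u2*v2*(2*v2^2-u2^2)/(u2^2+v2^2)^2) : ℝ×ℝ)
        + (l3*(u3^2+v3^2)^2/2) •
          ((u3^2*(2*v3^2-u3^2)/(u3^2+v3^2)^2, u3*v3*(2*v3^2-u3^2)/(u3^2+v3^2)^2) : ℝ×ℝ) := by
      rw [Prod.ext_iff]
      simp only [Prod.smul_mk, smul_eq_mul, Prod.mk_add_mk, Prod.fst, Prod.snd]
      constructor
      · rw [wt_mul_fst l1 u1 v1, wt_mul_fst l2 u2 v2, wt_mul_fst l3 u3 v3]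
        linear_combination e2 - (1/2)*e0
      · rw [wt_mul_snd l1 u1 v1, wt_mul_snd l2 u2 v2, wt_mul_snd l3 u3 v3]
        linear_combination e3 - (1/2)*e1
    rw [hxeq]
    refine comb3 (pt_mem u1 v1) (pt_mem u2 v2) (pt_mem u3 v3)
      (div_nonneg (mul_nonneg h1 (by positivity)) (by norm_num))
      (div_nonneg (mul_nonneg h2 (by positivity)) (by norm_num))
      (div_nonneg (mul_nonneg h3 (by positivity)) (by norm_num)) ?_
    linear_combination -(1/2)*e0 - e2 - (1/2)*e4
end

section
/- (Semidefinite representation of the bean convex hull with 2 liftings.) Let p(x) = x₁(x₁² + x₂²) − x₁⁴ − x₁²x₂² − x₂⁴ be the bean quartic and C = {x ∈ ℝ² : p(x) = 0}. Then conv(C) = {x ∈ ℝ² : ∃ (y₀, y₁) ∈ ℝ² such that the matrix [[y₀, y₁, x₁ − y₀], [y₁, x₁ − y₀, x₂ − y₁], [x₁ − y₀, x₂ − y₁, 1 − x₁]] is positive semidefinite}. -/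
open Set

lemma psd_iff (e0 e1 e2 e3 e4 : ℝ) :
    (!![e0,e1,e2;e1,e2,e3;e2,e3,e4] : Matrix (Fin 3) (Fin 3) ℝ).PosSemidef ↔
    ∀ a b c : ℝ, 0 ≤ a^2*e0 + 2*a*b*e1 + (b^2+2*a*c)*e2 + 2*b*c*e3 + c^2*e4 := by
  constructor
  · intro h a b c
    have := (Matrix.posSemidef_iff_dotProduct_mulVec.mp h).2 ![a,b,c]
    simp [dotProduct, Matrix.mulVec, Fin.sum_univ_three] at this
    nlinarith [this]
  · intro h
    rw [Matrix.posSemidef_iff_dotProduct_mulVec]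
    constructor
    · unfold Matrix.IsHermitian
      ext i j
      fin_cases i <;> fin_cases j <;> simp [Matrix.conjTranspose, Matrix.vecHead, Matrix.vecTail]
    · intro v
      have := h (v 0) (v 1) (v 2)
      simp [dotProduct, Matrix.mulVec, Fin.sum_univ_three]
      nlinarith [this]

lemma quartic_exists_min (g0 g1 g2 g3 g4 : ℝ) (h4 : 0 < g4) :
    ∃ A : ℝ, ∀ t : ℝ, g0 + g1*A + g2*A^2 + g3*A^3 + g4*A^4
      ≤ g0 + g1*t + g2*t^2 + g3*t^3 + g4*t^4 := by
  set G : ℝ → ℝ := fun t => g0 + g1*t + g2*t^2 + g3*t^3 + g4*t^4 with hGdef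
  set S : ℝ := |g0| + |g1| + |g2| + |g3| with hS
  set R : ℝ := (S + |g0| + 1)/g4 + 1 with hR
  have hS0 : 0 ≤ S := by positivity
  have hR1 : (1:ℝ) ≤ R := by
    have : 0 ≤ (S + |g0| + 1)/g4 := by positivity
    simp only [hR]; linarith
  have houter : ∀ t : ℝ, R ≤ |t| → G 0 ≤ G t := by
    intro t ht
    have hu1 : (1:ℝ) ≤ |t| := le_trans hR1 ht
    have hg4R : g4 * R = S + |g0| + 1 + g4 := by rw [hR, mul_add, mul_div_cancel₀ _ h4.ne', mul_one]
    have h1 : -(|g1| * |t|) ≤ g1 * t := by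
      rw [← abs_mul]; exact neg_abs_le _
    have h2 : -(|g2| * |t|^2) ≤ g2 * t^2 := by
      have : |g2 * t^2| = |g2| * |t|^2 := by rw [abs_mul, abs_pow]
      linarith [neg_abs_le (g2 * t^2), this.le, this.ge]
    have h3 : -(|g3| * |t|^3) ≤ g3 * t^3 := by
      have : |g3 * t^3| = |g3| * |t|^3 := by rw [abs_mul, abs_pow]
      linarith [neg_abs_le (g3 * t^3), this.le]
    have h4t : g4 * t^4 = g4 * |t|^4 := by rw [← abs_pow]; rw [abs_of_nonneg (by positivity)]
    have hu2 : |t| ≤ |t|^3 := by nlinarith [abs_nonneg t]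
    have hu3 : |t|^2 ≤ |t|^3 := by nlinarith [abs_nonneg t]
    have hgt : S + 1 ≤ g4 * |t| := by
      have := mul_le_mul_of_nonneg_left ht h4.le
      linarith [abs_nonneg g0]
    have hmain : 0 ≤ g1*t + g2*t^2 + g3*t^3 + g4*t^4 := by
      have k1 : |g1| * |t| ≤ |g1| * |t|^3 := mul_le_mul_of_nonneg_left hu2 (abs_nonneg g1)
      have k2 : |g2| * |t|^2 ≤ |g2| * |t|^3 := mul_le_mul_of_nonneg_left hu3 (abs_nonneg g2)
      have k3 : (S + 1) * |t|^3 ≤ (g4 * |t|) * |t|^3 :=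
        mul_le_mul_of_nonneg_right hgt (by positivity)
      have k4 : (g4 * |t|) * |t|^3 = g4 * |t|^4 := by ring
      have k5 : (0:ℝ) ≤ |t|^3 := by positivity
      have k6 : (|g1| + |g2| + |g3|) * |t|^3 ≤ S * |t|^3 :=
        mul_le_mul_of_nonneg_right (by simp only [hS]; linarith [abs_nonneg g0]) k5
      nlinarith [k5]
    simp only [hGdef]
    norm_num
    linarith
  obtain ⟨A, hAmem, hAmin⟩ := isCompact_Icc.exists_isMinOn (f := G) (s := Set.Icc (-R) R)
    ⟨0, by constructor <;> linarith⟩ (Continuous.continuousOn (by continuity))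
  refine ⟨A, fun t => ?_⟩
  have hA := isMinOn_iff.mp hAmin
  by_cases hcase : |t| ≤ R
  · exact hA t (abs_le.mp hcase)
  · have h0 : G A ≤ G 0 := hA 0 ⟨by linarith, by linarith⟩
    have := houter t (le_of_not_ge hcase)
    calc g0 + g1*A + g2*A^2 + g3*A^3 + g4*A^4 = G A := rfl
      _ ≤ G t := by linarith

lemma pairing (g0 g1 g2 g3 g4 s0 s1 s2 s3 s4 : ℝ) (h4 : 0 < g4)
    (hG : ∀ t : ℝ, 0 ≤ g0 + g1*t + g2*t^2 + g3*t^3 + g4*t^4)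
    (hF : ∀ a b c : ℝ, 0 ≤ a^2*s0 + 2*a*b*s1 + (b^2+2*a*c)*s2 + 2*b*c*s3 + c^2*s4) :
    0 ≤ g0*s0 + g1*s1 + g2*s2 + g3*s3 + g4*s4 := by
  obtain ⟨A, hA⟩ := quartic_exists_min g0 g1 g2 g3 g4 h4
  -- derivative vanishes at the global minimum
  have hderiv : HasDerivAt (fun t : ℝ => g0 + g1*t + g2*t^2 + g3*t^3 + g4*t^4)
      (g1 + 2*g2*A + 3*g3*A^2 + 4*g4*A^3) A := by
    have h0 := (hasDerivAt_const A g0).add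
        ((((hasDerivAt_pow 1 A).const_mul g1).add
          (((hasDerivAt_pow 2 A).const_mul g2).add
            (((hasDerivAt_pow 3 A).const_mul g3).add
              ((hasDerivAt_pow 4 A).const_mul g4)))))
    convert h0 using 1
    · rfl
    · rfl
    · funext t; simp only [Pi.add_apply]; ring
    · push_cast; ring
  have hlocal : IsLocalMin (fun t : ℝ => g0 + g1*t + g2*t^2 + g3*t^3 + g4*t^4) A :=
    Filter.Eventually.of_forall (hA ·)
  have hc1 : g1 + 2*g2*A + 3*g3*A^2 + 4*g4*A^3 = 0 := hlocal.hasDerivAt_eq_zero hderiv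
  set c3 : ℝ := g3 + 4*g4*A with hc3def
  set c2 : ℝ := g2 + 3*g3*A + 6*g4*A^2 with hc2def
  set m : ℝ := g0 + g1*A + g2*A^2 + g3*A^3 + g4*A^4 with hmdef
  have hm : 0 ≤ m := hG A
  -- nonnegativity of the shifted quadratic factor for e ≠ 0
  have hquad : ∀ e : ℝ, e ≠ 0 → 0 ≤ g4*e^2 + c3*e + c2 := by
    intro e he
    have h1 := hA (A + e)
    have h2 : g0 + g1*(A+e) + g2*(A+e)^2 + g3*(A+e)^3 + g4*(A+e)^4 - m
        = e^2 * (g4*e^2 + c3*e + c2) := by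
      simp only [hc3def, hc2def, hmdef]
      linear_combination e * hc1
    have he2 : 0 < e^2 := by positivity
    nlinarith [h1, h2]
  have hdisc : c3^2 ≤ 4*g4*c2 := by
    by_cases hc3 : c3 = 0
    · by_contra hcon
      push_neg at hcon
      have hc2neg : c2 < 0 := by
        rw [hc3] at hcon; nlinarith
      have hfracpos : 0 < -c2/(2*g4) := div_pos (by linarith) (by linarith)
      set e : ℝ := Real.sqrt (-c2/(2*g4)) with hedef
      have hepos : 0 < e := Real.sqrt_pos.mpr hfracpos
      have he2 : e^2 = -c2/(2*g4) := Real.sq_sqrt hfracpos.le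
      have hq := hquad e hepos.ne'
      rw [hc3, he2] at hq
      have hg4e : g4 * (-c2/(2*g4)) = -(c2/2) := by
        field_simp
      nlinarith [hq, hg4e, hc2neg]
    · have he : -c3/(2*g4) ≠ 0 := by
        simp only [ne_eq, div_eq_zero_iff, neg_eq_zero]
        push_neg
        exact ⟨hc3, by positivity⟩
      have := hquad _ he
      have hexp : g4*(-c3/(2*g4))^2 + c3*(-c3/(2*g4)) + c2 = c2 - c3^2/(4*g4) := by
        field_simp
        ring
      rw [hexp] at this
      have h4' : (0:ℝ) < 4*g4 := by linarith
      rw [← sub_nonneg]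
      calc (0:ℝ) ≤ (c2 - c3^2/(4*g4)) * (4*g4) := mul_nonneg this h4'.le
        _ = 4*g4*c2 - c3^2 := by field_simp
  -- the key SOS identity
  have hkey : 4*g4*(g0*s0 + g1*s1 + g2*s2 + g3*s3 + g4*s4)
      = 4*g4*m*(1^2*s0 + 2*1*0*s1 + (0^2+2*1*0)*s2 + 2*0*0*s3 + 0^2*s4)
      + (4*g4*c2 - c3^2)*((-A)^2*s0 + 2*(-A)*1*s1 + (1^2+2*(-A)*0)*s2 + 2*1*0*s3 + 0^2*s4)
      + ((2*g4*A^2-c3*A)^2*s0 + 2*(2*g4*A^2-c3*A)*(c3-4*g4*A)*s1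
          + ((c3-4*g4*A)^2+2*(2*g4*A^2-c3*A)*(2*g4))*s2
          + 2*(c3-4*g4*A)*(2*g4)*s3 + (2*g4)^2*s4) := by
    simp only [hc3def, hc2def, hmdef]
    linear_combination (4*g4*(s1 - A*s0)) * hc1
  have hF1 := hF 1 0 0
  have hF2 := hF (-A) 1 0
  have hF3 := hF (2*g4*A^2-c3*A) (c3-4*g4*A) (2*g4)
  have hd : 0 ≤ 4*g4*c2 - c3^2 := by linarith
  nlinarith [mul_nonneg (mul_nonneg (by linarith : (0:ℝ) ≤ 4*g4) hm) hF1,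
    mul_nonneg hd hF2, hF3, hkey, h4]

lemma isCompact_convexHull_plane {K : Set (ℝ×ℝ)} (hK : IsCompact K) :
    IsCompact (convexHull ℝ K) := by
  classical
  set f : (Fin 3 → ℝ) × (Fin 3 → ℝ×ℝ) → ℝ×ℝ := fun p => ∑ i, p.1 i • p.2 i with hfdef
  have hf : Continuous f := by
    apply continuous_finset_sum
    intro i _
    exact ((continuous_apply i).comp continuous_fst).smul
      ((continuous_apply i).comp continuous_snd)
  have hT : IsCompact ((stdSimplex ℝ (Fin 3)) ×ˢ (Set.univ.pi fun _ : Fin 3 => K)) :=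
    (isCompact_stdSimplex _ _).prod (isCompact_univ_pi fun _ => hK)
  have himg : convexHull ℝ K = f '' ((stdSimplex ℝ (Fin 3)) ×ˢ (Set.univ.pi fun _ : Fin 3 => K)) := by
    apply Set.Subset.antisymm
    · rw [convexHull_eq_union]
      refine Set.iUnion_subset fun t => Set.iUnion_subset fun ht => Set.iUnion_subset fun hai => ?_
      intro x hx
      have hne : t.Nonempty := by
        rcases t.eq_empty_or_nonempty with h | h
        · exfalso; rw [h] at hx; simp at hx
        · exact h
      have hcard : t.card ≤ 3 := by
        have h1 := hai.card_le_finrank_succ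
        have h2 : Module.finrank ℝ (vectorSpan ℝ (Set.range ((↑) : t → ℝ×ℝ))) ≤
            Module.finrank ℝ (ℝ×ℝ) := Submodule.finrank_le _
        have h3 : Module.finrank ℝ (ℝ×ℝ) = 2 := by
          simp [Module.finrank_prod]
        simp only [Fintype.card_coe] at h1
        omega
      -- helper to build membership
      have build : ∀ (w : Fin 3 → ℝ) (v : Fin 3 → ℝ×ℝ), (∀ i, 0 ≤ w i) → (∑ i, w i) = 1 →
          (∀ i, v i ∈ K) → (w 0 • v 0 + w 1 • v 1 + w 2 • v 2) ∈
            f '' ((stdSimplex ℝ (Fin 3)) ×ˢ (Set.univ.pi fun _ : Fin 3 => K)) := by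
        intro w v hw0 hw1 hv
        refine ⟨(w, v), ⟨⟨hw0, hw1⟩, fun i _ => hv i⟩, ?_⟩
        simp [hfdef, Fin.sum_univ_three]
      interval_cases h : t.card
      · exact absurd (Finset.card_eq_zero.mp h) hne.ne_empty
      · obtain ⟨a, rfl⟩ := Finset.card_eq_one.mp h
        rw [Finset.coe_singleton, convexHull_singleton, Set.mem_singleton_iff] at hx
        have ha : a ∈ K := ht (Finset.mem_singleton_self a)
        have := build ![1,0,0] ![a,a,a] (by intro i; fin_cases i <;> norm_num)
          (by simp [Fin.sum_univ_three]) (by intro i; fin_cases i <;> simpa)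
        rw [hx]
        simpa using this
      · obtain ⟨a, b, hab, rfl⟩ := Finset.card_eq_two.mp h
        rw [Finset.coe_insert, Finset.coe_singleton] at hx
        rw [convexHull_pair] at hx
        obtain ⟨u, v, hu, hv, huv, rfl⟩ := hx
        have ha : a ∈ K := ht (by simp)
        have hb : b ∈ K := ht (by simp)
        have := build ![u,v,0] ![a,b,b] (by intro i; fin_cases i <;> simp [hu, hv])
          (by simp [Fin.sum_univ_three]; linarith) (by intro i; fin_cases i <;> simpa)
        simpa using this
      · obtain ⟨a, b, c, hab, hac, hbc, rfl⟩ := Finset.card_eq_three.mp h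
        rw [Finset.convexHull_eq] at hx
        obtain ⟨w, hw0, hw1, hwx⟩ := hx
        rw [Finset.centerMass_eq_of_sum_1 _ _ hw1] at hwx
        have hsum : ∀ g : (ℝ×ℝ) → ℝ, (∑ y ∈ ({a,b,c} : Finset (ℝ×ℝ)), g y)
            = g a + g b + g c := by
          intro g
          rw [Finset.sum_insert (by simp [hab, hac]), Finset.sum_insert (by simp [hbc]),
            Finset.sum_singleton]
          ring
        have hsumV : ∀ g : (ℝ×ℝ) → ℝ×ℝ, (∑ y ∈ ({a,b,c} : Finset (ℝ×ℝ)), g y)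
            = g a + g b + g c := by
          intro g
          rw [Finset.sum_insert (by simp [hab, hac]), Finset.sum_insert (by simp [hbc]),
            Finset.sum_singleton]
          rw [add_assoc]
        have ha : a ∈ K := ht (by simp)
        have hb : b ∈ K := ht (by simp)
        have hc : c ∈ K := ht (by simp)
        have := build ![w a, w b, w c] ![a,b,c]
          (by intro i; fin_cases i <;> simp <;> [exact hw0 a (by simp); exact hw0 b (by simp); exact hw0 c (by simp)])
          (by rw [Fin.sum_univ_three]; simpa using (hsum w ▸ hw1))
          (by intro i; fin_cases i <;> simpa)
        rw [hsumV (fun y => w y • id y)] at hwx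
        simp only [id] at hwx
        simpa [hwx] using this
    · rintro _ ⟨⟨w, v⟩, ⟨hw, hv⟩, rfl⟩
      exact (convex_convexHull ℝ K).sum_mem (fun i _ => hw.1 i) hw.2
        (fun i _ => subset_convexHull ℝ K (hv i trivial))
  rw [himg]
  exact hT.image hf

lemma bean_param_mem (t : ℝ) :
    ((1+t^2)/(1+t^2+t^4), (t+t^3)/(1+t^2+t^4)) ∈
      {x : ℝ × ℝ | x.1 * (x.1 ^ 2 + x.2 ^ 2) - x.1 ^ 4 - x.1 ^ 2 * x.2 ^ 2 - x.2 ^ 4 = 0} := by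
  have hQ : (0:ℝ) < 1+t^2+t^4 := by positivity
  simp only [Set.mem_setOf_eq]
  field_simp
  ring

lemma bean_origin_mem :
    ((0:ℝ), (0:ℝ)) ∈
      {x : ℝ × ℝ | x.1 * (x.1 ^ 2 + x.2 ^ 2) - x.1 ^ 4 - x.1 ^ 2 * x.2 ^ 2 - x.2 ^ 4 = 0} := by
  simp

lemma bean_compact :
    IsCompact {x : ℝ × ℝ | x.1 * (x.1 ^ 2 + x.2 ^ 2) - x.1 ^ 4 - x.1 ^ 2 * x.2 ^ 2 - x.2 ^ 4 = 0} := by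
  apply IsCompact.of_isClosed_subset (isCompact_closedBall (0:ℝ×ℝ) 2)
  · exact isClosed_eq (by continuity) continuous_const
  · intro x hx
    simp only [Set.mem_setOf_eq] at hx
    have hq2 : x.1^2 + x.2^2 ≤ 4 := by
      set q : ℝ := x.1^2 + x.2^2 with hqdef
      have hq0 : 0 ≤ q := by positivity
      have h2 : x.1*q - (3/4)*q^2 = (x.1^2-x.2^2)^2/4 := by
        simp only [hqdef]; linear_combination hx
      have h3 : x.1^2 ≤ q := by nlinarith [sq_nonneg x.2]
      have h4 : (x.1*q)^2 ≤ q * q^2 := by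
        nlinarith [mul_le_mul_of_nonneg_right h3 (sq_nonneg q)]
      have h5 : ((3/4)*q^2)^2 ≤ (x.1*q)^2 := by
        have hge : (3/4)*q^2 ≤ x.1*q := by nlinarith [sq_nonneg (x.1^2-x.2^2)]
        have hge0 : (0:ℝ) ≤ (3/4)*q^2 := by positivity
        nlinarith [hge, hge0]
      have h6 : (9/16) * q^4 ≤ q^3 := by nlinarith [h4, h5]
      nlinarith [h6, hq0, sq_nonneg q, pow_nonneg hq0 3]
    rw [Metric.mem_closedBall, dist_zero_right, Prod.norm_def]
    have h1 : |x.1| ≤ 2 := abs_le.mpr ⟨by nlinarith [sq_nonneg x.2], by nlinarith [sq_nonneg x.2]⟩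
    have h2 : |x.2| ≤ 2 := abs_le.mpr ⟨by nlinarith [sq_nonneg x.1], by nlinarith [sq_nonneg x.1]⟩
    simp only [Real.norm_eq_abs]
    exact max_le h1 h2

/-- semidefinite representation, with 2 lifting variables, of the
convex hull of the bean quartic `p(x) = x₁(x₁² + x₂²) - x₁⁴ - x₁²x₂² - x₂⁴`. -/
theorem bean_convexHull_sdp :
    convexHull ℝ
        {x : ℝ × ℝ |
          x.1 * (x.1 ^ 2 + x.2 ^ 2) - x.1 ^ 4 - x.1 ^ 2 * x.2 ^ 2 - x.2 ^ 4 = 0}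
    = {x : ℝ × ℝ | ∃ y0 y1 : ℝ,
        (!![y0,        y1,        x.1 - y0;
            y1,        x.1 - y0,  x.2 - y1;
            x.1 - y0,  x.2 - y1,  1 - x.1] :
          Matrix (Fin 3) (Fin 3) ℝ).PosSemidef} := by
  apply Set.Subset.antisymm
  · -- convexHull C ⊆ S
    apply convexHull_min
    · -- C ⊆ S
      intro x hx
      simp only [Set.mem_setOf_eq] at hx ⊢
      by_cases h0 : x.1 = 0
      · have h2v : x.2 = 0 := by
          have : x.2^4 = 0 := by rw [h0] at hx; linarith [hx]
          exact pow_eq_zero_iff (by norm_num) |>.mp this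
        refine ⟨0, 0, (psd_iff 0 0 (x.1 - 0) (x.2 - 0) (1 - x.1)).mpr ?_⟩
        intro a b c
        rw [h0, h2v]
        norm_num
        positivity
      · have hx1sq : 0 < x.1^2 := lt_of_le_of_ne (sq_nonneg _) (Ne.symm (pow_ne_zero 2 h0))
        have hx1 : 0 < x.1 := by nlinarith [sq_nonneg x.2, sq_nonneg (x.1*x.2), sq_nonneg (x.2^2)]
        set q : ℝ := x.1^2 + x.2^2 with hqdef
        have hq : 0 < q := by positivity
        refine ⟨x.1^3/q, x.1^2*x.2/q, (psd_iff _ _ _ _ _).mpr ?_⟩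
        intro a b c
        have e2 : x.1 - x.1^3/q = x.1*x.2^2/q := by
          field_simp
          ring
        have e3 : x.2 - x.1^2*x.2/q = x.2^3/q := by
          field_simp
          ring
        have e4 : 1 - x.1 = x.2^4/(x.1*q) := by
          rw [eq_div_iff (by positivity)]
          simp only [hqdef]
          linear_combination hx
        rw [e2, e3, e4]
        have key : a^2*(x.1^3/q) + 2*a*b*(x.1^2*x.2/q) + (b^2+2*a*c)*(x.1*x.2^2/q)
            + 2*b*c*(x.2^3/q) + c^2*(x.2^4/(x.1*q))
            = (a*x.1^2 + b*x.1*x.2 + c*x.2^2)^2 / (x.1*q) := by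
          field_simp
          ring
        rw [key]
        positivity
    · -- S is convex
      intro x hx y hy a b ha hb hab
      obtain ⟨p0, p1, hp⟩ := hx
      obtain ⟨q0, q1, hq⟩ := hy
      refine ⟨a*p0 + b*q0, a*p1 + b*q1, (psd_iff _ _ _ _ _).mpr ?_⟩
      have hp' := (psd_iff _ _ _ _ _).mp hp
      have hq' := (psd_iff _ _ _ _ _).mp hq
      intro u v w
      have h1 := hp' u v w
      have h2 := hq' u v w
      have e1 : (a • x + b • y).1 = a*x.1 + b*y.1 := by
        simp [Prod.smul_fst, smul_eq_mul]
      have e2 : (a • x + b • y).2 = a*x.2 + b*y.2 := by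
        simp [Prod.smul_snd, smul_eq_mul]
      rw [e1, e2]
      have key : u^2*(a*p0+b*q0) + 2*u*v*(a*p1+b*q1)
          + (v^2+2*u*w)*((a*x.1+b*y.1) - (a*p0+b*q0))
          + 2*v*w*((a*x.2+b*y.2) - (a*p1+b*q1)) + w^2*(1 - (a*x.1+b*y.1))
          = a * (u^2*p0 + 2*u*v*p1 + (v^2+2*u*w)*(x.1-p0) + 2*v*w*(x.2-p1) + w^2*(1-x.1))
          + b * (u^2*q0 + 2*u*v*q1 + (v^2+2*u*w)*(y.1-q0) + 2*v*w*(y.2-q1) + w^2*(1-y.1)) := by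
        linear_combination (-(w^2)) * hab
      rw [key]
      exact add_nonneg (mul_nonneg ha h1) (mul_nonneg hb h2)
  · -- S ⊆ convexHull C
    intro x hx
    simp only [Set.mem_setOf_eq] at hx
    obtain ⟨y0, y1, hpsd⟩ := hx
    have hF := (psd_iff _ _ _ _ _).mp hpsd
    by_contra hxc
    obtain ⟨f, u, hfu, hux⟩ := geometric_hahn_banach_closed_point
      (convex_convexHull ℝ _) (isCompact_convexHull_plane bean_compact).isClosed hxc
    set b1 : ℝ := f (1, 0) with hb1
    set b2 : ℝ := f (0, 1) with hb2
    have hfeval : ∀ z : ℝ × ℝ, f z = z.1 * b1 + z.2 * b2 := by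
      intro z
      have hz : z = z.1 • ((1:ℝ), (0:ℝ)) + z.2 • ((0:ℝ), (1:ℝ)) := by
        ext <;> simp
      conv_lhs => rw [hz]
      rw [map_add, map_smul, map_smul, smul_eq_mul, smul_eq_mul]
    have hu0 : 0 < u := by
      have := hfu _ (subset_convexHull ℝ _ bean_origin_mem)
      rw [hfeval] at this
      simpa using this
    have hGpos : ∀ t : ℝ, 0 ≤ (u - b1) + (-b2)*t + (u - b1)*t^2 + (-b2)*t^3 + u*t^4 := by
      intro t
      have hQ : (0:ℝ) < 1 + t^2 + t^4 := by positivity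
      have hft := hfu _ (subset_convexHull ℝ _ (bean_param_mem t))
      rw [hfeval] at hft
      simp only at hft
      have key : (u - b1) + (-b2)*t + (u - b1)*t^2 + (-b2)*t^3 + u*t^4
          = (1 + t^2 + t^4) * (u - ((1+t^2)/(1+t^2+t^4) * b1 + (t+t^3)/(1+t^2+t^4) * b2)) := by
        field_simp
        ring
      rw [key]
      have : 0 < u - ((1+t^2)/(1+t^2+t^4) * b1 + (t+t^3)/(1+t^2+t^4) * b2) := by linarith
      exact (mul_pos hQ this).le
    have hpair := pairing (u - b1) (-b2) (u - b1) (-b2) u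
      y0 y1 (x.1 - y0) (x.2 - y1) (1 - x.1) hu0 hGpos hF
    have hxlt : u < x.1 * b1 + x.2 * b2 := by
      have := hux
      rw [hfeval] at this
      exact this
    nlinarith [hpair, hxlt]
end

section
/- (Rational parametrization of the bean curve.) Let p(x) = x₁(x₁² + x₂²) − x₁⁴ − x₁²x₂² − x₂⁴. Then {x ∈ ℝ² : p(x) = 0} = {((1 + t²)/(1 + t² + t⁴), (t + t³)/(1 + t² + t⁴)) : t ∈ ℝ} ∪ {(0,0)}. -/
/-- rational parametrization of the bean curve
`x₁(x₁² + x₂²) - x₁⁴ - x₁²x₂² - x₂⁴ = 0`. -/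
theorem bean_rational_parametrization :
    {x : ℝ × ℝ |
        x.1 * (x.1 ^ 2 + x.2 ^ 2) - x.1 ^ 4 - x.1 ^ 2 * x.2 ^ 2 - x.2 ^ 4 = 0}
    = (Set.range fun t : ℝ =>
        (((1 + t ^ 2) / (1 + t ^ 2 + t ^ 4), (t + t ^ 3) / (1 + t ^ 2 + t ^ 4)) : ℝ × ℝ))
      ∪ {((0, 0) : ℝ × ℝ)} := by
  ext ⟨a, b⟩
  simp only [Set.mem_setOf_eq, Set.mem_union, Set.mem_range, Set.mem_singleton_iff,
    Prod.mk.injEq]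
  constructor
  · intro h
    by_cases ha : a = 0
    · right
      subst ha
      refine ⟨rfl, ?_⟩
      have : b ^ 4 = 0 := by nlinarith
      exact pow_eq_zero_iff (by norm_num) |>.mp this
    · left
      refine ⟨b / a, ?_, ?_⟩
      · have hd : (0:ℝ) < 1 + (b / a) ^ 2 + (b / a) ^ 4 := by positivity
        rw [div_eq_iff (ne_of_gt hd)]
        field_simp
        linear_combination h
      · have hd : (0:ℝ) < 1 + (b / a) ^ 2 + (b / a) ^ 4 := by positivity
        rw [div_eq_iff (ne_of_gt hd)]
        field_simp
        linear_combination b * h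
  · rintro (⟨t, ht⟩ | ⟨ha, hb⟩)
    · obtain ⟨h1, h2⟩ := ht
      have hd : (0:ℝ) < 1 + t ^ 2 + t ^ 4 := by positivity
      subst h1 h2
      field_simp
      ring
    · subst ha; subst hb; norm_num
end

section
/- (Rational parametrization of the folium curve.) Let p(x) = −x₁(x₁² − 2x₂²) − (x₁² + x₂²)². Then {x ∈ ℝ² : p(x) = 0} = {((−1 + 2t²)/(1 + 2t² + t⁴), (−t + 2t³)/(1 + 2t² + t⁴)) : t ∈ ℝ} ∪ {(0,0)}. -/
/-- rational parametrization of the folium curve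
`-x₁(x₁² - 2x₂²) - (x₁² + x₂²)² = 0`. -/
theorem folium_rational_parametrization :
    {x : ℝ × ℝ |
        -x.1 * (x.1 ^ 2 - 2 * x.2 ^ 2) - (x.1 ^ 2 + x.2 ^ 2) ^ 2 = 0}
    = (Set.range fun t : ℝ =>
        (((-1 + 2 * t ^ 2) / (1 + 2 * t ^ 2 + t ^ 4),
          (-t + 2 * t ^ 3) / (1 + 2 * t ^ 2 + t ^ 4)) : ℝ × ℝ))
      ∪ {((0, 0) : ℝ × ℝ)} := by
  ext x
  simp only [Set.mem_setOf_eq, Set.mem_union, Set.mem_range, Set.mem_singleton_iff]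
  constructor
  · intro h
    by_cases hx : x.1 = 0
    · right
      have h2 : x.2 = 0 := by
        have h4 : x.2 ^ 4 = 0 := by nlinarith [h, hx, sq_nonneg x.2]
        exact pow_eq_zero_iff (by norm_num) |>.mp h4
      exact Prod.ext hx h2
    · left
      refine ⟨x.2 / x.1, Prod.ext ?_ ?_⟩ <;> simp only
      · have hD : (1 : ℝ) + 2 * (x.2 / x.1) ^ 2 + (x.2 / x.1) ^ 4 ≠ 0 := by positivity
        field_simp
        linear_combination h
      · have hD : (1 : ℝ) + 2 * (x.2 / x.1) ^ 2 + (x.2 / x.1) ^ 4 ≠ 0 := by positivity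
        field_simp
        linear_combination x.2 * h
  · rintro (⟨t, rfl⟩ | rfl)
    · have hD : (1 : ℝ) + 2 * t ^ 2 + t ^ 4 ≠ 0 := by positivity
      simp only
      field_simp
      ring
    · norm_num
end

section
/- (No exact SOS certificate for the bean at any relaxation order.) Let p(x) = x₁(x₁² + x₂²) − x₁⁴ − x₁²x₂² − x₂⁴ be the bean quartic. There exist no polynomials s₀, s₁ ∈ ℝ[x₁,x₂] with s₀ a sum of squares such that x₁ = s₀(x) + s₁(x)·p(x) identically. (This is the reason the convex hull of the bean curve is strictly contained in every Lasserre relaxation P_k.) -/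
open MvPolynomial

/-- there is no SOS certificate `x₁ = s₀ + s₁·p` for the bean quartic
`p = x₁(x₁² + x₂²) - x₁⁴ - x₁²x₂² - x₂⁴`, with `s₀` a sum of squares of polynomials. -/
theorem bean_no_sos_certificate :
    ¬ ∃ (s0 s1 : MvPolynomial (Fin 2) ℝ),
      (∃ (n : ℕ) (q : Fin n → MvPolynomial (Fin 2) ℝ), s0 = ∑ i, q i ^ 2) ∧
      (X 0 : MvPolynomial (Fin 2) ℝ)
        = s0 + s1 * (X 0 * (X 0 ^ 2 + X 1 ^ 2)
            - X 0 ^ 4 - X 0 ^ 2 * X 1 ^ 2 - X 1 ^ 4) := by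
  rintro ⟨s0, s1, ⟨n, q, rfl⟩, h⟩
  -- Restrict the identity to the line x₂ = 0 via the substitution (x₁, x₂) ↦ (X, 0),
  -- obtaining a univariate identity  X = ∑ fᵢ² + g · (X³ − X⁴).
  let φ : MvPolynomial (Fin 2) ℝ →ₐ[ℝ] Polynomial ℝ := aeval ![Polynomial.X, 0]
  have h' := congrArg φ h
  simp only [map_add, map_mul, map_sub, map_pow, map_sum, φ, aeval_X,
    Matrix.cons_val_zero, Matrix.cons_val_one, Matrix.head_cons,
    ne_eq, OfNat.ofNat_ne_zero, not_false_eq_true, zero_pow, mul_zero,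
    add_zero, sub_zero] at h'
  set f : Fin n → Polynomial ℝ := fun i => φ (q i) with hf
  set g : Polynomial ℝ := φ s1 with hg
  -- Evaluating at 0: each fᵢ vanishes at 0 (the SOS part vanishes at the origin).
  have h0 : ∀ i, (f i).eval 0 = 0 := by
    have := congrArg (Polynomial.eval 0) h'
    simp [Polynomial.eval_finset_sum] at this
    intro i
    have hsum : ∑ j, ((f j).eval 0) ^ 2 = 0 := this.symm
    have := (Finset.sum_eq_zero_iff_of_nonneg (fun j _ => sq_nonneg _)).mp hsum i
      (Finset.mem_univ i)
    exact pow_eq_zero_iff (by norm_num) |>.mp this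
  -- Differentiate at 0: the right side has vanishing derivative (singular point),
  -- but the left side has derivative 1 — contradiction.
  have hd := congrArg (fun P => Polynomial.eval 0 (Polynomial.derivative P)) h'
  simp [Polynomial.derivative_mul, Polynomial.derivative_pow, Polynomial.eval_finset_sum,
    (show ∀ i, Polynomial.eval 0 ((aeval ![Polynomial.X, (0 : Polynomial ℝ)]) (q i)) = 0 from h0)] at hd
end

section
/- (No exact SOS certificate for the water drop at any relaxation order.) Let p(x) = −x₁² − x₂³ − (x₁² + x₂²)² be the water drop quartic. Then: (a) every x ∈ ℝ² with p(x) = 0 satisfies x₂ ≤ 0, so f(x) = −x₂ is nonnegative on the curve, and (b) there exist no polynomials s₀, s₁ ∈ ℝ[x₁,x₂] with s₀ a sum of squares such that −x₂ = s₀(x) + s₁(x)·p(x) identically. -/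
open MvPolynomial

/-- for the water drop quartic `p = -x₁² - x₂³ - (x₁² + x₂²)²`:
(a) every real zero of `p` satisfies `x₂ ≤ 0`, so `f(x) = -x₂` is nonnegative on the
curve, and (b) there is no SOS certificate `-x₂ = s₀ + s₁·p` with `s₀` a sum of
squares of polynomials. -/
theorem waterdrop_no_sos_certificate :
    (∀ x : ℝ × ℝ,
      -x.1 ^ 2 - x.2 ^ 3 - (x.1 ^ 2 + x.2 ^ 2) ^ 2 = 0 → x.2 ≤ 0) ∧
    ¬ ∃ (s0 s1 : MvPolynomial (Fin 2) ℝ),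
      (∃ (n : ℕ) (q : Fin n → MvPolynomial (Fin 2) ℝ), s0 = ∑ i, q i ^ 2) ∧
      (-X 1 : MvPolynomial (Fin 2) ℝ)
        = s0 + s1 * (-X 0 ^ 2 - X 1 ^ 3 - (X 0 ^ 2 + X 1 ^ 2) ^ 2) := by
  constructor
  · intro x hx
    by_contra hpos
    push_neg at hpos
    have h3 : 0 < x.2 ^ 3 := pow_pos hpos 3
    nlinarith [sq_nonneg x.1, sq_nonneg (x.1 ^ 2 + x.2 ^ 2)]
  · rintro ⟨s0, s1, ⟨n, q, rfl⟩, h⟩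
    set φ : MvPolynomial (Fin 2) ℝ →ₐ[ℝ] Polynomial ℝ :=
      aeval (fun i => if i = 0 then 0 else Polynomial.X) with hφdef
    have hX0 : φ (X 0) = 0 := by simp [hφdef]
    have hX1 : φ (X 1) = Polynomial.X := by simp [hφdef]
    have hmain := congrArg φ h
    simp only [map_neg, map_add, map_sub, map_mul, map_pow, map_sum, hX0, hX1] at hmain
    -- hmain : -Polynomial.X = (∑ i, φ (q i) ^ 2) + φ s1 * (-0^2 - X^3 - (0^2 + X^2)^2)
    set P0 : Polynomial ℝ := ∑ i, φ (q i) ^ 2 with hP0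
    set P1 : Polynomial ℝ := φ s1 with hP1
    have hmain' : -Polynomial.X = P0 + P1 * (-(Polynomial.X ^ 3) - Polynomial.X ^ 4) := by
      rw [hmain]; ring
    -- coefficient 0 of P0 is 0
    have hc0 : P0.coeff 0 = 0 := by
      have := congrArg (fun p => Polynomial.coeff p 0) hmain'
      simp [Polynomial.coeff_X_zero, Polynomial.mul_coeff_zero, Polynomial.coeff_sub] at this
      linarith [this]
    -- each q i evaluates to a polynomial with zero constant term
    have hc0' : ∀ i, (φ (q i)).coeff 0 = 0 := by
      have hsum : ∑ i, ((φ (q i)).coeff 0) ^ 2 = 0 := by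
        rw [← hc0, hP0, Polynomial.finset_sum_coeff]
        refine Finset.sum_congr rfl fun i _ => ?_
        rw [sq, sq, Polynomial.mul_coeff_zero]
      intro i
      have := (Finset.sum_eq_zero_iff_of_nonneg (fun j _ => sq_nonneg _)).mp hsum i
        (Finset.mem_univ i)
      exact pow_eq_zero_iff (by norm_num) |>.mp this
    have hdvd : (Polynomial.X : Polynomial ℝ) ^ 2 ∣ P0 := by
      refine Finset.dvd_sum fun i _ => ?_
      have : (Polynomial.X : Polynomial ℝ) ∣ φ (q i) :=
        Polynomial.X_dvd_iff.mpr (hc0' i)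
      exact pow_dvd_pow_of_dvd this 2
    have hdvd2 : (Polynomial.X : Polynomial ℝ) ^ 2 ∣
        P1 * (-(Polynomial.X ^ 3) - Polynomial.X ^ 4) := by
      refine Dvd.dvd.mul_left ?_ P1
      have h3 : (Polynomial.X : Polynomial ℝ) ^ 2 ∣ Polynomial.X ^ 3 := pow_dvd_pow _ (by norm_num)
      have h4 : (Polynomial.X : Polynomial ℝ) ^ 2 ∣ Polynomial.X ^ 4 := pow_dvd_pow _ (by norm_num)
      exact dvd_sub (dvd_neg.mpr h3) h4
    have hdvdX : (Polynomial.X : Polynomial ℝ) ^ 2 ∣ Polynomial.X := by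
      have : (Polynomial.X : Polynomial ℝ) ^ 2 ∣ -Polynomial.X := by
        rw [hmain']; exact dvd_add hdvd hdvd2
      exact (dvd_neg).mp this
    have := Polynomial.natDegree_le_of_dvd hdvdX Polynomial.X_ne_zero
    simp [Polynomial.natDegree_X_pow, Polynomial.natDegree_X] at this
end

section
/- (Smooth convex quartic for which the first relaxation is not exact.) Let p(x) = x₁ + x₁² − 2x₁⁴ − x₂⁴. Then: (a) every x ∈ ℝ² with p(x) = 0 satisfies x₁ ≥ 0, so f(x) = x₁ is nonnegative on the curve {p = 0} and vanishes at the curve point (0,0); and (b) for every c ∈ ℝ there exists x ∈ ℝ² with x₁ − c·p(x) < 0, i.e. no scaled tangent certificate f − c·p is globally nonnegative. -/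
/-- for the smooth convex quartic `p(x) = x₁ + x₁² - 2x₁⁴ - x₂⁴`:
(a) every real zero of `p` satisfies `x₁ ≥ 0`, so `f(x) = x₁` is nonnegative on the
curve `{p = 0}` and vanishes at the curve point `(0,0)`; and (b) for every constant
`c` the polynomial `x₁ - c·p(x)` is somewhere negative on `ℝ²`. -/
theorem smooth_convex_quartic_not_exact :
    (∀ x : ℝ × ℝ,
      x.1 + x.1 ^ 2 - 2 * x.1 ^ 4 - x.2 ^ 4 = 0 → 0 ≤ x.1) ∧
    ((0 : ℝ) + (0 : ℝ) ^ 2 - 2 * (0 : ℝ) ^ 4 - (0 : ℝ) ^ 4 = 0) ∧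
    (∀ c : ℝ, ∃ x : ℝ × ℝ,
      x.1 - c * (x.1 + x.1 ^ 2 - 2 * x.1 ^ 4 - x.2 ^ 4) < 0) := by
  refine ⟨?_, by norm_num, ?_⟩
  · intro x h
    by_contra hx
    push_neg at hx
    nlinarith [sq_nonneg (x.2^2), sq_nonneg x.2, sq_nonneg (x.1 + 1), sq_nonneg (x.1^2 - x.1), sq_nonneg (x.1^2 + x.1), sq_nonneg x.1, mul_pos (neg_pos.mpr hx) (neg_pos.mpr hx)]
  · intro c
    by_cases hc : c = 1
    · exact ⟨(1/2, 0), by rw [hc]; norm_num⟩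
    · set K : ℝ := 3 * c ^ 2 + 4 with hK
      have hKpos : (0:ℝ) < K := by positivity
      refine ⟨((c - 1) / K, 0), ?_⟩
      have h1 : (c - 1) ^ 2 > 0 := by
        have : c - 1 ≠ 0 := sub_ne_zero.mpr hc
        positivity
      have key : K ^ 3 + c * K ^ 2 - 2 * c * (1 - c) ^ 2 > 0 := by
        nlinarith [sq_nonneg c, sq_nonneg (c-1), sq_nonneg (c+1), sq_nonneg (c^2-1), sq_nonneg (c^2+c)]
      have hKne : K ≠ 0 := ne_of_gt hKpos
      show (c - 1) / K - c * ((c - 1) / K + ((c - 1) / K) ^ 2 - 2 * ((c - 1) / K) ^ 4 - (0:ℝ) ^ 4) < 0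
      have hlt : (c - 1) / K - c * ((c - 1) / K + ((c - 1) / K) ^ 2 - 2 * ((c - 1) / K) ^ 4 - (0:ℝ) ^ 4)
          = -((c - 1) ^ 2 * (K ^ 3 + c * K ^ 2 - 2 * c * (1 - c) ^ 2)) / K ^ 4 := by
        field_simp
        ring
      rw [hlt]
      apply div_neg_of_neg_of_pos
      · have := mul_pos h1 key
        linarith
      · positivity
end
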